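/- arXiv:0810.3629 — 11 statements merged into one kernel-verified Lean document; each statement's English description precedes it below -/
import Mathlib

section
/- Let T be the bounded linear operator on ℓ²(ℕ, ℂ) determined on the standard orthonormal basis by T e_n = √(1 − q^{2(n+1)}) e_{n+1}. Then its Hilbert-space adjoint T* satisfies T* e_0 = 0 and T* e_n = √(1 − q^{2n}) e_{n−1} for n ≥ 1, and the operator identity T*T = q² T T* + (1 − q²)·I holds. (This realizes the defining relation z*z = q² z z* + (1 − q²) of the quantum disc in the Fock representation.) -/
noncomputable section

open ContinuousLinearMap

/-- The standard orthonormal basis vectors of `ℓ²(ℕ, ℂ)`. -/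
def fockBasis (n : ℕ) : lp (fun _ : ℕ => ℂ) 2 := lp.single 2 n 1

/-!
`T` is the weighted shift with weights `cₙ = √(1 - q^{2(n+1)})` along the standard Hilbert basis,
so `T*` is the backward shift with weights `conj cₙ`, and both `T*T` and `TT*` are diagonal, with
entries `|cₙ|²` and `|cₙ₋₁|²` (`0` at `n = 0`). The operator identity therefore reduces, on each
basis vector, to `1 - q^{2(n+1)} = q² (1 - q^{2n}) + (1 - q²)`.
-/

open ComplexConjugate

theorem HilbertBasis.ext_continuousLinearMap {ι 𝕜 E F : Type*} [RCLike 𝕜] [NormedAddCommGroup E]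
    [InnerProductSpace 𝕜 E] [AddCommMonoid F] [Module 𝕜 F] [TopologicalSpace F] [T2Space F]
    (b : HilbertBasis ι 𝕜 E) {f g : E →L[𝕜] F} (h : ∀ i, f (b i) = g (b i)) : f = g :=
  ext_on (Submodule.dense_iff_topologicalClosure_eq_top.mpr b.dense_span)
    (by rintro _ ⟨i, rfl⟩; exact h i)

section WeightedShift

variable {𝕜 E : Type*} [RCLike 𝕜] [NormedAddCommGroup E] [InnerProductSpace 𝕜 E] [CompleteSpace E]
  (b : HilbertBasis ℕ 𝕜 E) {c : ℕ → 𝕜} {T : E →L[𝕜] E}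

theorem adjoint_weightedShift_zero (hT : ∀ n, T (b n) = c n • b (n + 1)) :
    adjoint T (b 0) = 0 := by
  apply b.repr.injective
  ext k
  simp [b.repr_apply_apply, adjoint_inner_right, hT, inner_smul_left, b.orthonormal.inner_eq_zero]

theorem adjoint_weightedShift_succ (hT : ∀ n, T (b n) = c n • b (n + 1)) (n : ℕ) :
    adjoint T (b (n + 1)) = conj (c n) • b n := by
  apply b.repr.injective
  ext k
  simp only [b.repr_apply_apply, adjoint_inner_right, hT, inner_smul_left, inner_smul_right,
    orthonormal_iff_ite.mp b.orthonormal, add_left_inj, mul_ite, mul_one, mul_zero]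
  split_ifs with h <;> simp [h]

theorem adjoint_comp_weightedShift (hT : ∀ n, T (b n) = c n • b (n + 1)) (n : ℕ) :
    (adjoint T ∘L T) (b n) = (conj (c n) * c n) • b n := by
  rw [comp_apply, hT, map_smul, adjoint_weightedShift_succ b hT, smul_smul, mul_comm]

theorem weightedShift_comp_adjoint_zero (hT : ∀ n, T (b n) = c n • b (n + 1)) :
    (T ∘L adjoint T) (b 0) = 0 := by
  rw [comp_apply, adjoint_weightedShift_zero b hT, map_zero]

theorem weightedShift_comp_adjoint_succ (hT : ∀ n, T (b n) = c n • b (n + 1)) (n : ℕ) :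
    (T ∘L adjoint T) (b (n + 1)) = (conj (c n) * c n) • b (n + 1) := by
  rw [comp_apply, adjoint_weightedShift_succ b hT, map_smul, hT, smul_smul]

end WeightedShift

def fockHilbertBasis : HilbertBasis ℕ ℂ (lp (fun _ : ℕ => ℂ) 2) :=
  HilbertBasis.ofRepr (LinearIsometryEquiv.refl ℂ _)

theorem coe_fockHilbertBasis : ⇑fockHilbertBasis = fockBasis := by
  classical
  ext1 n
  rw [← fockHilbertBasis.repr_symm_single]
  rfl

theorem quantum_disc_fock_relation (q : ℝ) (hq0 : 0 < q) (hq1 : q < 1)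
    (T : lp (fun _ : ℕ => ℂ) 2 →L[ℂ] lp (fun _ : ℕ => ℂ) 2)
    (hT : ∀ n : ℕ, T (fockBasis n) =
      (Real.sqrt (1 - q ^ (2 * (n + 1))) : ℂ) • fockBasis (n + 1)) :
    (ContinuousLinearMap.adjoint T) (fockBasis 0) = 0 ∧
    (∀ n : ℕ, (ContinuousLinearMap.adjoint T) (fockBasis (n + 1)) =
      (Real.sqrt (1 - q ^ (2 * (n + 1))) : ℂ) • fockBasis n) ∧
    (ContinuousLinearMap.adjoint T) ∘L T =
      ((q : ℂ) ^ 2) • (T ∘L ContinuousLinearMap.adjoint T) +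
        ((1 : ℂ) - (q : ℂ) ^ 2) • (1 : lp (fun _ : ℕ => ℂ) 2 →L[ℂ] lp (fun _ : ℕ => ℂ) 2) := by
  set b := fockHilbertBasis
  have hT' : ∀ n, T (b n) = (Real.sqrt (1 - q ^ (2 * (n + 1))) : ℂ) • b (n + 1) := by
    simpa only [b, coe_fockHilbertBasis] using hT
  have hweight (n : ℕ) : conj (Real.sqrt (1 - q ^ (2 * (n + 1))) : ℂ) *
      (Real.sqrt (1 - q ^ (2 * (n + 1))) : ℂ) = 1 - (q : ℂ) ^ (2 * (n + 1)) := by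
    rw [Complex.conj_ofReal, ← Complex.ofReal_mul,
      Real.mul_self_sqrt (sub_nonneg.mpr (pow_le_one₀ hq0.le hq1.le))]
    norm_cast
  refine ⟨?_, fun n => ?_, b.ext_continuousLinearMap ?_⟩
  · simpa only [b, coe_fockHilbertBasis] using adjoint_weightedShift_zero b hT'
  · simpa only [b, coe_fockHilbertBasis, Complex.conj_ofReal] using
      adjoint_weightedShift_succ b hT' n
  · intro n
    rw [add_apply, smul_apply, smul_apply, one_apply_eq_self, adjoint_comp_weightedShift b hT',
      hweight]
    rcases n with _ | n
    · rw [weightedShift_comp_adjoint_zero b hT', smul_zero, zero_add]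
      norm_num
    · rw [weightedShift_comp_adjoint_succ b hT', hweight, smul_smul, ← add_smul]
      congr 1
      ring
end
end

section
/- The Fock representation of the quantum disc is irreducible: if M is a closed subspace of ℓ²(ℕ, ℂ) that is invariant under both T and T*, then M = {0} or M = ℓ²(ℕ, ℂ). -/
/-!
`T` is a weighted shift with nonzero weights, so `ker T* = ℂ e₀`. Let `M` be a closed subspace
invariant under `T` and `T*`; then so is `Mᗮ`. Splitting `e₀ = y + z` along `M ⊕ Mᗮ`, the vectors
`T* y ∈ M` and `T* z ∈ Mᗮ` add up to `T* e₀ = 0`, so both vanish and `y ∈ ker T* = ℂ e₀`. Hence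
`e₀` lies in `M` or in `Mᗮ`, and applying `T` repeatedly puts every `eₙ` there, so that `Mᗮ = ⊥`
or `M ⊆ Mᗮᗮ = ⊥`.
-/

noncomputable section

open ContinuousLinearMap

open Module.End

open scoped InnerProductSpace

section Orthogonal

variable {𝕜 E : Type*} [RCLike 𝕜] [NormedAddCommGroup E] [InnerProductSpace 𝕜 E]

theorem Submodule.mem_or_mem_orthogonal_of_ker_eq_span {K : Submodule 𝕜 E}
    [K.HasOrthogonalProjection] {S : E →ₗ[𝕜] E} (hK : K ∈ invtSubmodule S)
    (hK' : Kᗮ ∈ invtSubmodule S) {v : E} (hv : LinearMap.ker S = 𝕜 ∙ v) :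
    v ∈ K ∨ v ∈ Kᗮ := by
  obtain ⟨y, hy, z, hz, rfl⟩ := K.exists_add_mem_mem_orthogonal v
  have hSv : S y + S z = 0 := by
    rw [← map_add, ← LinearMap.mem_ker, hv]
    exact Submodule.mem_span_singleton_self _
  have hSy : S y = 0 := by
    refine Submodule.disjoint_def.1 K.orthogonal_disjoint _ (hK hy) ?_
    rw [eq_neg_of_add_eq_zero_left hSv]
    exact Submodule.neg_mem _ (hK' hz)
  obtain ⟨c, hc⟩ := Submodule.mem_span_singleton.1 (hv ▸ LinearMap.mem_ker.2 hSy)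
  rcases eq_or_ne c 0 with rfl | hc0
  · rw [zero_smul] at hc
    rw [← hc, zero_add]
    exact Or.inr hz
  · rw [← inv_smul_smul₀ hc0 (y + z), hc]
    exact Or.inl (K.smul_mem _ hy)

end Orthogonal

local notation "ℓ²" => lp (fun _ : ℕ => ℂ) 2

theorem inner_fockBasis_left (n : ℕ) (f : ℓ²) : ⟪fockBasis n, f⟫_ℂ = f n := by
  simp [fockBasis, lp.inner_single_left, RCLike.inner_apply]

theorem orthogonal_eq_bot_of_forall_fockBasis_mem {N : Submodule ℂ ℓ²}
    (h : ∀ n, fockBasis n ∈ N) : Nᗮ = ⊥ := by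
  refine (Submodule.eq_bot_iff _).2 fun y hy => lp.ext (funext fun n => ?_)
  rw [← inner_fockBasis_left]
  exact (Submodule.mem_orthogonal N y).1 hy _ (h n)

section WeightedShift

variable {c : ℕ → ℂ} {T : ℓ² →L[ℂ] ℓ²} (hT : ∀ n, T (fockBasis n) = c n • fockBasis (n + 1))
include hT

theorem adjoint_weightedShift_apply (y : ℓ²) (n : ℕ) :
    adjoint T y n = starRingEnd ℂ (c n) * y (n + 1) := by
  rw [← inner_fockBasis_left, adjoint_inner_right, hT, inner_smul_left, inner_fockBasis_left]

theorem ker_adjoint_weightedShift (hc : ∀ n, c n ≠ 0) :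
    LinearMap.ker (adjoint T).toLinearMap = ℂ ∙ fockBasis 0 := by
  ext y
  rw [LinearMap.mem_ker, Submodule.mem_span_singleton]
  constructor
  · intro hy
    refine ⟨y 0, lp.ext (funext fun n => ?_)⟩
    rcases n with _ | n
    · simp [fockBasis]
    · have h : starRingEnd ℂ (c n) * y (n + 1) = 0 := by
        rw [← adjoint_weightedShift_apply hT, ← coe_coe, hy, lp.coeFn_zero, Pi.zero_apply]
      simp [fockBasis, (mul_eq_zero.1 h).resolve_left (by simpa using hc n)]
  · rintro ⟨a, rfl⟩
    refine lp.ext (funext fun n => ?_)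
    simp [adjoint_weightedShift_apply hT, fockBasis]

theorem fockBasis_mem_of_mem_invtSubmodule (hc : ∀ n, c n ≠ 0) {N : Submodule ℂ ℓ²}
    (hN : N ∈ invtSubmodule T.toLinearMap) (h0 : fockBasis 0 ∈ N) (n : ℕ) :
    fockBasis n ∈ N := by
  induction n with
  | zero => exact h0
  | succ n ih =>
    have h : T (fockBasis n) ∈ N := hN ih
    rw [hT] at h
    simpa [hc n] using N.smul_mem (c n)⁻¹ h

theorem weightedShift_irreducible (hc : ∀ n, c n ≠ 0) {M : Submodule ℂ ℓ²}
    (hM : IsClosed (M : Set ℓ²)) (hMT : M ∈ invtSubmodule T.toLinearMap)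
    (hMT' : M ∈ invtSubmodule (adjoint T).toLinearMap) : M = ⊥ ∨ M = ⊤ := by
  have : CompleteSpace M := hM.completeSpace_coe
  have hMorthT : Mᗮ ∈ invtSubmodule T.toLinearMap := orthogonal_mem_invtSubmodule hMT'
  have hMorthT' : Mᗮ ∈ invtSubmodule (adjoint T).toLinearMap :=
    orthogonal_mem_invtSubmodule (by rwa [adjoint_adjoint])
  rcases Submodule.mem_or_mem_orthogonal_of_ker_eq_span hMT' hMorthT'
      (ker_adjoint_weightedShift hT hc) with h0 | h0
  · right
    exact Submodule.orthogonal_eq_bot_iff.1 <| orthogonal_eq_bot_of_forall_fockBasis_mem <|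
      fockBasis_mem_of_mem_invtSubmodule hT hc hMT h0
  · left
    rw [eq_bot_iff, ← orthogonal_eq_bot_of_forall_fockBasis_mem <|
      fockBasis_mem_of_mem_invtSubmodule hT hc hMorthT h0]
    exact M.le_orthogonal_orthogonal

end WeightedShift

theorem fock_representation_irreducible (q : ℝ) (hq0 : 0 < q) (hq1 : q < 1)
    (T : lp (fun _ : ℕ => ℂ) 2 →L[ℂ] lp (fun _ : ℕ => ℂ) 2)
    (hT : ∀ n : ℕ, T (fockBasis n) =
      (Real.sqrt (1 - q ^ (2 * (n + 1))) : ℂ) • fockBasis (n + 1)) :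
    ∀ M : Submodule ℂ (lp (fun _ : ℕ => ℂ) 2),
      IsClosed (M : Set (lp (fun _ : ℕ => ℂ) 2)) →
      (∀ x ∈ M, T x ∈ M) →
      (∀ x ∈ M, (ContinuousLinearMap.adjoint T) x ∈ M) →
      M = ⊥ ∨ M = ⊤ := by
  intro M hM hMT hMT'
  refine weightedShift_irreducible hT (fun n => ?_) hM hMT hMT'
  have hqn : q ^ (2 * (n + 1)) < 1 := pow_lt_one₀ hq0.le hq1 (by omega)
  exact_mod_cast (Real.sqrt_pos.2 (sub_pos.2 hqn)).ne'
end
end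

section
/- The smallest norm-closed subalgebra of the bounded operators on ℓ²(ℕ, ℂ) that contains both T and T* contains every compact operator on ℓ²(ℕ, ℂ). -/
/-!
The operator `S = (T*T - TT*) / (1 - q²)` is diagonal with eigenvalues `q^(2n)`, so its powers
converge in norm to the rank-one projection `|e₀⟩⟨e₀|`. Conjugating by the weighted shift,
`Tᵐ |e₀⟩⟨e₀| T*ⁿ` is a nonzero multiple of `|eₘ⟩⟨eₙ|`, so the closed algebra contains every
matrix unit and hence every `|x⟩⟨y| = rankOne ℂ x y`. Finally a compact `K` is the norm limit of
`Pₛ K`, where `Pₛ` are the coordinate projections onto finitely many basis vectors: they are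
uniformly bounded and converge to the identity pointwise, hence uniformly on the relatively
compact set `K(ball)`. Each `Pₛ K` is a finite sum of operators `|eᵢ⟩⟨K* eᵢ|`.
-/

noncomputable section

open ContinuousLinearMap

open Filter Topology InnerProductSpace
open scoped NNReal

theorem IsCompactOperator.tendsto_comp_of_tendsto_pointwise {𝕜 E F ι : Type*} [RCLike 𝕜]
    [NormedAddCommGroup E] [NormedSpace 𝕜 E] [NormedAddCommGroup F] [NormedSpace 𝕜 F]
    {K : E →L[𝕜] F} (hK : IsCompactOperator K) {l : Filter ι} {P : ι → F →L[𝕜] F} {C : ℝ≥0}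
    (hP : ∀ i, ‖P i‖ ≤ C) (hPy : ∀ y, Tendsto (fun i => P i y) l (𝓝 y)) :
    Tendsto (fun i => P i ∘L K) l (𝓝 K) := by
  set X := closure (K '' Metric.closedBall 0 1)
  have : CompactSpace X :=
    isCompact_iff_compactSpace.mp (hK.isCompact_closure_image_closedBall 1)
  have hequi : Equicontinuous fun i (y : X) => P i y :=
    (LipschitzWith.uniformEquicontinuous _ C fun i =>
      (lipschitzWith_of_opNorm_le (hP i)).restrict X).equicontinuous
  have hunif : TendstoUniformly (fun i (y : X) => P i y) (fun y => y) l :=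
    UniformFun.tendsto_iff_tendstoUniformly.1
      ((hequi.tendsto_uniformFun_iff_pi l _).2 (tendsto_pi_nhds.2 fun y => hPy y))
  refine Metric.tendsto_nhds.2 fun ε hε => ?_
  filter_upwards [Metric.tendstoUniformly_iff.1 hunif (ε / 2) (half_pos hε)] with i hi
  rw [dist_eq_norm]
  refine (opNorm_le_of_unit_norm (half_pos hε).le fun x hx => ?_).trans_lt (half_lt_self hε)
  have hKx : K x ∈ X := subset_closure ⟨x, by simp [hx], rfl⟩
  simpa [dist_eq_norm'] using (hi ⟨K x, hKx⟩).le

theorem pow_mul_mem {R S : Type*} [Monoid R] [SetLike S R] [MulMemClass S R] {A : S} {a x : R}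
    (ha : a ∈ A) (hx : x ∈ A) (n : ℕ) : a ^ n * x ∈ A := by
  induction n with
  | zero => simpa using hx
  | succ n ih => rw [pow_succ', mul_assoc]; exact mul_mem ha ih

theorem mul_pow_mem {R S : Type*} [Monoid R] [SetLike S R] [MulMemClass S R] {A : S} {a x : R}
    (ha : a ∈ A) (hx : x ∈ A) (n : ℕ) : x * a ^ n ∈ A := by
  induction n with
  | zero => simpa using hx
  | succ n ih => rw [pow_succ, ← mul_assoc]; exact mul_mem ih ha

namespace HilbertBasis

section

variable {ι 𝕜 E : Type*} [RCLike 𝕜] [NormedAddCommGroup E] [InnerProductSpace 𝕜 E]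
  (b : HilbertBasis ι 𝕜 E)

theorem inner_eq_ite [DecidableEq ι] (i j : ι) :
    inner 𝕜 (b i) (b j) = if i = j then 1 else 0 :=
  orthonormal_iff_ite.1 b.orthonormal i j

theorem ext_inner_left {v w : E} (h : ∀ i, inner 𝕜 (b i) v = inner 𝕜 (b i) w) : v = w :=
  b.repr.injective <| lp.ext <| funext fun i => by simp only [b.repr_apply_apply, h]

theorem submodule_eq_top_of_isClosed {N : Submodule 𝕜 E} (hN : IsClosed (N : Set E))
    (hb : ∀ i, b i ∈ N) : N = ⊤ := by
  rw [eq_top_iff, ← b.dense_span]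
  exact (Submodule.span 𝕜 _).topologicalClosure_minimal
    (Submodule.span_le.2 (Set.range_subset_iff.2 hb)) hN

theorem rankOne_mem_of_forall_basis {F : Type*} [NormedAddCommGroup F] [NormedSpace 𝕜 F]
    {M : Submodule 𝕜 (E →L[𝕜] F)} (hM : IsClosed (M : Set (E →L[𝕜] F))) (x : F)
    (hx : ∀ i, rankOne 𝕜 x (b i) ∈ M) (y : E) : rankOne 𝕜 x y ∈ M := by
  let N : Submodule 𝕜 E := M.comap (rankOne 𝕜 x : E →L⋆[𝕜] E →L[𝕜] F).toLinearMap
  have hN : N = ⊤ := b.submodule_eq_top_of_isClosed (hM.preimage (rankOne 𝕜 x).continuous) hx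
  exact (Submodule.eq_top_iff'.1 hN y : _)

theorem sum_rankOne_apply_basis [DecidableEq ι] (s : Finset ι) (j : ι) :
    (∑ i ∈ s, rankOne 𝕜 (b i) (b i)) (b j) = (if j ∈ s then 1 else 0 : 𝕜) • b j := by
  simp only [sum_apply, rankOne_apply, b.inner_eq_ite, ite_smul, one_smul, zero_smul,
    Finset.sum_ite_eq']

theorem tendsto_sum_rankOne_apply (x : E) :
    Tendsto (fun s : Finset ι => (∑ i ∈ s, rankOne 𝕜 (b i) (b i)) x) atTop (𝓝 x) := by
  simp only [sum_apply, rankOne_apply, ← b.repr_apply_apply]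
  exact b.hasSum_repr x

variable [CompleteSpace E]

theorem adjoint_apply_of_apply_eq_smul {D : E →L[𝕜] E} {d : ι → 𝕜}
    (hD : ∀ i, D (b i) = d i • b i) (i : ι) :
    adjoint D (b i) = starRingEnd 𝕜 (d i) • b i := by
  classical
  refine b.ext_inner_left fun j => ?_
  rw [adjoint_inner_right, hD, inner_smul_left, inner_smul_right, b.inner_eq_ite]
  split_ifs with h <;> simp [h]

theorem inner_apply_of_apply_eq_smul {D : E →L[𝕜] E} {d : ι → 𝕜}
    (hD : ∀ i, D (b i) = d i • b i) (i : ι) (x : E) :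
    inner 𝕜 (b i) (D x) = d i * inner 𝕜 (b i) x := by
  rw [← adjoint_inner_left, b.adjoint_apply_of_apply_eq_smul hD, inner_smul_left,
    RCLike.conj_conj]

theorem norm_le_of_apply_eq_smul {D : E →L[𝕜] E} {d : ι → 𝕜} (hD : ∀ i, D (b i) = d i • b i)
    {C : ℝ} (hC : 0 ≤ C) (hd : ∀ i, ‖d i‖ ≤ C) : ‖D‖ ≤ C := by
  refine D.opNorm_le_bound hC fun x => ?_
  calc ‖D x‖ = ‖b.repr (D x)‖ := (b.repr.norm_map _).symm
    _ ≤ ‖C • b.repr x‖ := lp.norm_mono two_ne_zero fun i => by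
        simp only [lp.coeFn_smul, Pi.smul_apply, b.repr_apply_apply,
          b.inner_apply_of_apply_eq_smul hD, norm_mul, norm_smul, Real.norm_of_nonneg hC]
        exact mul_le_mul_of_nonneg_right (hd i) (norm_nonneg _)
    _ = C * ‖x‖ := by rw [norm_smul, Real.norm_of_nonneg hC, b.repr.norm_map]

theorem tendsto_pow_of_apply_eq_smul {D : E →L[𝕜] E} {d : ι → 𝕜}
    (hD : ∀ i, D (b i) = d i • b i) {i₀ : ι} (hd₀ : d i₀ = 1) {r : ℝ} (hr₀ : 0 ≤ r) (hr₁ : r < 1)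
    (hd : ∀ i ≠ i₀, ‖d i‖ ≤ r) :
    Tendsto (fun k => D ^ k) atTop (𝓝 (rankOne 𝕜 (b i₀) (b i₀))) := by
  classical
  have hpow : ∀ k i, (D ^ k) (b i) = d i ^ k • b i := by
    intro k i
    induction k with
    | zero => simp
    | succ k ih => rw [pow_succ, mul_apply_eq_comp, hD, map_smul, ih, smul_smul, pow_succ, mul_comm]
  have hdist : ∀ k, ‖D ^ k - rankOne 𝕜 (b i₀) (b i₀)‖ ≤ r ^ k := fun k =>
    b.norm_le_of_apply_eq_smul (d := fun i => d i ^ k - if i = i₀ then 1 else 0)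
      (fun i => by
        rw [sub_apply, hpow, rankOne_apply, b.inner_eq_ite, sub_smul]
        by_cases h : i = i₀ <;> simp [h, Ne.symm])
      (by positivity) (fun i => by
        by_cases h : i = i₀
        · simp [h, hd₀, pow_nonneg hr₀]
        · simpa [h, norm_pow] using pow_le_pow_left₀ (norm_nonneg _) (hd i h) k)
  exact tendsto_iff_norm_sub_tendsto_zero.2 <| squeeze_zero (fun _ => norm_nonneg _) hdist
    (tendsto_pow_atTop_nhds_zero_of_lt_one hr₀ hr₁)

theorem mem_of_isCompactOperator {M : Submodule 𝕜 (E →L[𝕜] E)}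
    (hM : IsClosed (M : Set (E →L[𝕜] E))) (hb : ∀ i j, rankOne 𝕜 (b i) (b j) ∈ M)
    {K : E →L[𝕜] E} (hK : IsCompactOperator K) : K ∈ M := by
  classical
  have hP : ∀ s : Finset ι, ‖∑ i ∈ s, rankOne 𝕜 (b i) (b i)‖ ≤ (1 : ℝ≥0) := fun s =>
    b.norm_le_of_apply_eq_smul (b.sum_rankOne_apply_basis s) zero_le_one fun i => by
      split_ifs <;> simp
  refine hM.mem_of_tendsto (hK.tendsto_comp_of_tendsto_pointwise hP b.tendsto_sum_rankOne_apply)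
    (Eventually.of_forall fun s => ?_)
  rw [SetLike.mem_coe, ← mul_def, Finset.sum_mul]
  refine sum_mem fun i _ => ?_
  rw [mul_def, rankOne_comp]
  exact b.rankOne_mem_of_forall_basis hM (b i) (hb i) _

end

section

variable {𝕜 E : Type*} [RCLike 𝕜] [NormedAddCommGroup E] [InnerProductSpace 𝕜 E]
  (b : HilbertBasis ℕ 𝕜 E) {T : E →L[𝕜] E} {c : ℕ → 𝕜}

theorem pow_apply_zero_of_shift (hT : ∀ n, T (b n) = c n • b (n + 1)) (m : ℕ) :
    (T ^ m) (b 0) = (∏ i ∈ Finset.range m, c i) • b m := by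
  induction m with
  | zero => simp
  | succ m ih =>
    rw [pow_succ', mul_apply_eq_comp, ih, map_smul, hT, smul_smul, Finset.prod_range_succ]

variable [CompleteSpace E]

theorem adjoint_apply_zero_of_shift (hT : ∀ n, T (b n) = c n • b (n + 1)) :
    adjoint T (b 0) = 0 := by
  classical
  refine b.ext_inner_left fun j => ?_
  rw [adjoint_inner_right, hT, inner_smul_left, b.inner_eq_ite, inner_zero_right]
  simp

theorem adjoint_apply_succ_of_shift (hT : ∀ n, T (b n) = c n • b (n + 1)) (n : ℕ) :
    adjoint T (b (n + 1)) = starRingEnd 𝕜 (c n) • b n := by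
  classical
  refine b.ext_inner_left fun j => ?_
  rw [adjoint_inner_right, hT, inner_smul_left, inner_smul_right, b.inner_eq_ite,
    b.inner_eq_ite]
  by_cases h : j = n <;> simp [h]

theorem rankOne_mem_of_shift (hT : ∀ n, T (b n) = c n • b (n + 1))
    {A : NonUnitalSubalgebra 𝕜 (E →L[𝕜] E)} (hTA : T ∈ A) (hTA' : adjoint T ∈ A)
    (hA₀ : rankOne 𝕜 (b 0) (b 0) ∈ A) (hc : ∀ n, c n ≠ 0) (m n : ℕ) :
    rankOne 𝕜 (b m) (b n) ∈ A := by
  set g : ℕ → 𝕜 := fun m => ∏ i ∈ Finset.range m, c i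
  have hg : ∀ m, g m ≠ 0 := fun m => Finset.prod_ne_zero_iff.2 fun i _ => hc i
  have key : T ^ m * rankOne 𝕜 (b 0) (b 0) * adjoint T ^ n
      = (g m * starRingEnd 𝕜 (g n)) • rankOne 𝕜 (b m) (b n) := by
    have hstar : adjoint (adjoint T ^ n) = T ^ n := by
      rw [← star_eq_adjoint, ← star_eq_adjoint, star_pow, star_star]
    rw [mul_def, mul_def, comp_rankOne, rankOne_comp, hstar, b.pow_apply_zero_of_shift hT,
      b.pow_apply_zero_of_shift hT]
    ext z
    simp only [rankOne_apply, smul_apply, inner_smul_left, smul_smul, g]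
    ring_nf
  have hmem := mul_pow_mem hTA' (pow_mul_mem hTA hA₀ m) n
  rw [key] at hmem
  have hgg : g m * starRingEnd 𝕜 (g n) ≠ 0 := mul_ne_zero (hg m) ((map_ne_zero _).2 (hg n))
  have hsmul := A.smul_mem (g m * starRingEnd 𝕜 (g n))⁻¹ hmem
  rwa [smul_smul, inv_mul_cancel₀ hgg, one_smul] at hsmul

theorem adjoint_mul_sub_mul_adjoint_apply_of_fock {q : ℝ} (hq : |q| ≤ 1)
    (hT : ∀ n, T (b n) = (√(1 - q ^ (2 * (n + 1))) : 𝕜) • b (n + 1)) (n : ℕ) :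
    (adjoint T * T - T * adjoint T) (b n) = (((1 - q ^ 2) * q ^ (2 * n) : ℝ) : 𝕜) • b n := by
  have hsq : ∀ k : ℕ,
      √(1 - q ^ (2 * (k + 1))) * √(1 - q ^ (2 * (k + 1))) = 1 - q ^ (2 * (k + 1)) :=
    fun k => Real.mul_self_sqrt <| sub_nonneg.2 <| by
      rw [pow_mul]; exact pow_le_one₀ (sq_nonneg q) ((sq_le_one_iff_abs_le_one q).2 hq)
  simp only [sub_apply, mul_apply_eq_comp, hT]
  cases n with
  | zero =>
    rw [map_smul, b.adjoint_apply_succ_of_shift hT, b.adjoint_apply_zero_of_shift hT, map_zero T,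
      sub_zero, smul_smul, RCLike.conj_ofReal, ← RCLike.ofReal_mul, hsq]
    congr 2; ring
  | succ m =>
    rw [map_smul, b.adjoint_apply_succ_of_shift hT, b.adjoint_apply_succ_of_shift hT, map_smul,
      hT, smul_smul, smul_smul, ← sub_smul, RCLike.conj_ofReal, RCLike.conj_ofReal,
      ← RCLike.ofReal_mul, ← RCLike.ofReal_mul, hsq, hsq, ← RCLike.ofReal_sub]
    congr 2; ring

theorem rankOne_zero_mem_of_fock {q : ℝ} (hq : |q| < 1)
    (hT : ∀ n, T (b n) = (√(1 - q ^ (2 * (n + 1))) : 𝕜) • b (n + 1))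
    {A : NonUnitalSubalgebra 𝕜 (E →L[𝕜] E)} (hA : IsClosed (A : Set (E →L[𝕜] E)))
    (hTA : T ∈ A) (hTA' : adjoint T ∈ A) : rankOne 𝕜 (b 0) (b 0) ∈ A := by
  have hq2 : q ^ 2 < 1 := (sq_lt_one_iff_abs_lt_one q).2 hq
  let S := ((1 - q ^ 2 : ℝ) : 𝕜)⁻¹ • (adjoint T * T - T * adjoint T)
  have hSA : S ∈ A := SMulMemClass.smul_mem _ (sub_mem (mul_mem hTA' hTA) (mul_mem hTA hTA'))
  have hSb : ∀ n, S (b n) = (((q ^ 2) ^ n : ℝ) : 𝕜) • b n := fun n => by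
    rw [smul_apply, b.adjoint_mul_sub_mul_adjoint_apply_of_fock hq.le hT, smul_smul,
      ← RCLike.ofReal_inv, ← RCLike.ofReal_mul, inv_mul_cancel_left₀ (by linarith), pow_mul]
  refine hA.mem_of_tendsto ((b.tendsto_pow_of_apply_eq_smul hSb (by simp) (sq_nonneg q) hq2
    fun n hn => ?_).comp (tendsto_add_atTop_nat 1)) (Eventually.of_forall fun k => ?_)
  · simpa using pow_le_of_le_one (sq_nonneg q) hq2.le hn
  · simpa only [Function.comp_apply, pow_succ', SetLike.mem_coe] using mul_pow_mem hSA hSA k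

end

end HilbertBasis

open lp in
theorem hilbertBasis_default_apply (n : ℕ) :
    (default : HilbertBasis ℕ ℂ ℓ²(ℕ, ℂ)) n = fockBasis n := by
  rw [← HilbertBasis.repr_symm_single]; rfl

theorem fock_algebra_contains_compacts (q : ℝ) (hq0 : 0 < q) (hq1 : q < 1)
    (T : lp (fun _ : ℕ => ℂ) 2 →L[ℂ] lp (fun _ : ℕ => ℂ) 2)
    (hT : ∀ n : ℕ, T (fockBasis n) =
      (Real.sqrt (1 - q ^ (2 * (n + 1))) : ℂ) • fockBasis (n + 1)) :
    ∀ K : lp (fun _ : ℕ => ℂ) 2 →L[ℂ] lp (fun _ : ℕ => ℂ) 2, IsCompactOperator (⇑K) →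
      K ∈ (NonUnitalAlgebra.adjoin ℂ
        ({T, ContinuousLinearMap.adjoint T} :
          Set (lp (fun _ : ℕ => ℂ) 2 →L[ℂ] lp (fun _ : ℕ => ℂ) 2))).topologicalClosure := by
  intro K hK
  set A₀ := NonUnitalAlgebra.adjoin ℂ
    ({T, adjoint T} : Set (lp (fun _ : ℕ => ℂ) 2 →L[ℂ] lp (fun _ : ℕ => ℂ) 2))
  have hA := A₀.isClosed_topologicalClosure
  have hTA : T ∈ A₀.topologicalClosure :=
    A₀.le_topologicalClosure <| NonUnitalAlgebra.subset_adjoin ℂ (Set.mem_insert _ _)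
  have hTA' : adjoint T ∈ A₀.topologicalClosure :=
    A₀.le_topologicalClosure <| NonUnitalAlgebra.subset_adjoin ℂ (Set.mem_insert_of_mem _ rfl)
  let b : HilbertBasis ℕ ℂ (lp (fun _ : ℕ => ℂ) 2) := default
  have hTb : ∀ n, T (b n) = (√(1 - q ^ (2 * (n + 1))) : ℂ) • b (n + 1) := by
    simpa only [b, hilbertBasis_default_apply] using hT
  have hq : |q| < 1 := abs_lt.2 ⟨by linarith, hq1⟩
  have hc : ∀ n : ℕ, (√(1 - q ^ (2 * (n + 1))) : ℂ) ≠ 0 := fun n => by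
    rw [Complex.ofReal_ne_zero, Real.sqrt_ne_zero', sub_pos, pow_mul]
    exact pow_lt_one₀ (sq_nonneg q) ((sq_lt_one_iff_abs_lt_one q).2 hq) n.succ_ne_zero
  exact b.mem_of_isCompactOperator (M := A₀.topologicalClosure.toSubmodule) hA
    (b.rankOne_mem_of_shift hTb hTA hTA' (b.rankOne_zero_mem_of_fock hq hTb hA hTA hTA') hc) hK
end
end

section
/- The monomials {z^k w^j : k, j ∈ ℕ} form a basis of the quantum disc algebra Pol(ℂ)_q as a ℂ-vector space; i.e., every element of Pol(ℂ)_q has a unique expansion as a finite ℂ-linear combination of the elements z^k w^j. -/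
/-!
The span of the monomials contains `1` and is stable under left multiplication by the
generators, since `z · zᵏwʲ = zᵏ⁺¹wʲ` and `w · zᵏwʲ = q²ᵏ zᵏwʲ⁺¹ + (1 - q²ᵏ) zᵏ⁻¹wʲ`; as `z` and `w`
generate the algebra, the monomials span it. Read as operators on the free vector space with basis
`e (k, j)`, the same two formulas satisfy the defining relation, so they give a representation of
`Pol(ℂ)_q` in which `zᵏwʲ` sends `e (0, 0)` to `e (k, j)`; hence the monomials are independent.
-/

noncomputable section

/-- The defining relation of the quantum disc algebra: `w z = q² z w + (1 − q²)·1`,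
where `true` encodes the generator `z` and `false` the generator `w`. -/
inductive DiscRel (q : ℝ) : FreeAlgebra ℂ Bool → FreeAlgebra ℂ Bool → Prop
  | rel : DiscRel q (FreeAlgebra.ι ℂ false * FreeAlgebra.ι ℂ true)
      (((q : ℂ) ^ 2) • (FreeAlgebra.ι ℂ true * FreeAlgebra.ι ℂ false) +
        ((1 : ℂ) - (q : ℂ) ^ 2) • (1 : FreeAlgebra ℂ Bool))

/-- The quantum disc algebra `Pol(ℂ)_q`. -/
abbrev PolDisc (q : ℝ) := RingQuot (DiscRel q)

/-- The generator `z` of the quantum disc algebra. -/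
def zGen (q : ℝ) : PolDisc q := RingQuot.mkAlgHom ℂ (DiscRel q) (FreeAlgebra.ι ℂ true)

/-- The generator `w = z*` of the quantum disc algebra. -/
def wGen (q : ℝ) : PolDisc q := RingQuot.mkAlgHom ℂ (DiscRel q) (FreeAlgebra.ι ℂ false)

theorem Submodule.span_eq_top_of_mul_mem {R A : Type*} [CommSemiring R] [Semiring A] [Algebra R A]
    {s t : Set A} (hs : Algebra.adjoin R s = ⊤) (h1 : 1 ∈ span R t)
    (hmul : ∀ x ∈ s, ∀ y ∈ t, x * y ∈ span R t) : span R t = ⊤ := by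
  have hmul_span (x : A) (hx : x ∈ s) : span R t ≤ (span R t).comap (LinearMap.mulLeft R x) :=
    span_le.mpr fun y hy => hmul x hx y hy
  rw [eq_top_iff, ← Algebra.toSubmodule_eq_top.mpr hs, Algebra.adjoin_eq_span, span_le]
  intro a ha
  induction ha using Submonoid.closure_induction_left with
  | one => exact h1
  | mul_left x hx y _ hy => exact hmul_span x hx hy

namespace PolDisc

open Finsupp

variable (q : ℝ)

def monomial (p : ℕ × ℕ) : PolDisc q := zGen q ^ p.1 * wGen q ^ p.2

theorem wGen_mul_zGen :
    wGen q * zGen q = (q : ℂ) ^ 2 • (zGen q * wGen q) + (1 - (q : ℂ) ^ 2) • 1 := by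
  rw [wGen, zGen, ← map_mul, RingQuot.mkAlgHom_rel ℂ DiscRel.rel]
  simp only [map_add, map_smul, map_mul, map_one]

theorem wGen_mul_zGen_pow_succ (k : ℕ) :
    wGen q * zGen q ^ (k + 1) =
      (q : ℂ) ^ (2 * (k + 1)) • (zGen q ^ (k + 1) * wGen q) +
        (1 - (q : ℂ) ^ (2 * (k + 1))) • zGen q ^ k := by
  induction k with
  | zero => simpa using wGen_mul_zGen q
  | succ k ih =>
    rw [pow_succ' _ (k + 1), ← mul_assoc, wGen_mul_zGen, add_mul, smul_mul_assoc, smul_mul_assoc,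
      one_mul, mul_assoc, ih, mul_add, mul_smul_comm, mul_smul_comm, ← mul_assoc, ← pow_succ',
      ← pow_succ']
    match_scalars <;> ring

theorem zGen_mul_monomial (p : ℕ × ℕ) : zGen q * monomial q p = monomial q (p.1 + 1, p.2) := by
  rw [monomial, monomial, ← mul_assoc, ← pow_succ']

theorem wGen_mul_monomial_zero (j : ℕ) : wGen q * monomial q (0, j) = monomial q (0, j + 1) := by
  simp only [monomial, pow_zero, one_mul, pow_succ']

theorem wGen_mul_monomial_succ (k j : ℕ) :
    wGen q * monomial q (k + 1, j) =
      (q : ℂ) ^ (2 * (k + 1)) • monomial q (k + 1, j + 1) +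
        (1 - (q : ℂ) ^ (2 * (k + 1))) • monomial q (k, j) := by
  simp only [monomial, ← mul_assoc, wGen_mul_zGen_pow_succ, add_mul, smul_mul_assoc,
    pow_succ' (wGen q)]

theorem adjoin_zGen_wGen : Algebra.adjoin ℂ {zGen q, wGen q} = ⊤ := by
  have hgen :
      {zGen q, wGen q} = RingQuot.mkAlgHom ℂ (DiscRel q) '' Set.range (FreeAlgebra.ι ℂ) := by
    rw [← Set.range_comp, Set.range_eq_iUnion, Set.insert_eq, Set.union_comm]
    ext; simp [zGen, wGen, or_comm]
  rw [hgen, ← AlgHom.map_adjoin, FreeAlgebra.adjoin_range_ι, Algebra.map_top,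
    AlgHom.range_eq_top]
  exact RingQuot.mkAlgHom_surjective ℂ (DiscRel q)

theorem span_monomial : Submodule.span ℂ (Set.range (monomial q)) = ⊤ := by
  have mem (p : ℕ × ℕ) : monomial q p ∈ Submodule.span ℂ (Set.range (monomial q)) :=
    Submodule.subset_span ⟨p, rfl⟩
  refine Submodule.span_eq_top_of_mul_mem (adjoin_zGen_wGen q) (by simpa [monomial] using mem 0) ?_
  rintro x (rfl | rfl) _ ⟨⟨k, j⟩, rfl⟩
  · exact zGen_mul_monomial q _ ▸ mem _
  · rcases k with _ | k
    · exact wGen_mul_monomial_zero q j ▸ mem _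
    · rw [wGen_mul_monomial_succ]
      exact add_mem (Submodule.smul_mem _ _ (mem _)) (Submodule.smul_mem _ _ (mem _))

def zOp : Module.End ℂ ((ℕ × ℕ) →₀ ℂ) :=
  linearCombination ℂ fun p => single (p.1 + 1, p.2) 1

-- Left multiplication by `w` in the monomial basis, read off from `wGen_mul_monomial_succ`; at
-- `p.1 = 0` the second term has coefficient `0`, so the truncated `p.1 - 1` is harmless.
def wOp : Module.End ℂ ((ℕ × ℕ) →₀ ℂ) :=
  linearCombination ℂ fun p =>
    (q : ℂ) ^ (2 * p.1) • single (p.1, p.2 + 1) 1 +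
      (1 - (q : ℂ) ^ (2 * p.1)) • single (p.1 - 1, p.2) 1

theorem wOp_mul_zOp :
    wOp q * zOp = (q : ℂ) ^ 2 • (zOp * wOp q) + (1 - (q : ℂ) ^ 2) • 1 := by
  refine lhom_ext' fun p => LinearMap.ext_ring ?_
  rcases p with ⟨_ | k, j⟩ <;>
  · simp only [zOp, wOp, LinearMap.comp_apply, Module.End.mul_apply, LinearMap.add_apply,
      LinearMap.smul_apply, Module.End.one_apply, lsingle_apply, linearCombination_single,
      map_add, map_smul, one_smul, smul_add, smul_smul, add_tsub_cancel_right]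
    match_scalars <;> ring

def rep : PolDisc q →ₐ[ℂ] Module.End ℂ ((ℕ × ℕ) →₀ ℂ) :=
  RingQuot.liftAlgHom ℂ ⟨FreeAlgebra.lift ℂ fun b => if b then zOp else wOp q, by
    rintro _ _ ⟨⟩
    simpa using wOp_mul_zOp q⟩

theorem zOp_pow_single (k : ℕ) (p : ℕ × ℕ) :
    (zOp ^ k) (single p 1) = single (p.1 + k, p.2) 1 := by
  induction k with
  | zero => simp
  | succ k ih =>
    rw [pow_succ', Module.End.mul_apply, ih, zOp, linearCombination_single, one_smul, add_assoc]

theorem wOp_pow_single_zero (j : ℕ) : (wOp q ^ j) (single (0, 0) 1) = single (0, j) 1 := by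
  induction j with
  | zero => simp
  | succ j ih =>
    rw [pow_succ', Module.End.mul_apply, ih, wOp, linearCombination_single]
    simp

theorem rep_monomial_single_zero (p : ℕ × ℕ) :
    rep q (monomial q p) (single (0, 0) 1) = single p 1 := by
  simp [rep, monomial, zGen, wGen, Module.End.mul_apply, wOp_pow_single_zero, zOp_pow_single]

theorem linearIndependent_monomial : LinearIndependent ℂ (monomial q) := by
  refine LinearIndependent.of_comp
    ((LinearMap.applyₗ (single (0, 0) 1)).comp (rep q).toLinearMap) ?_
  convert (Finsupp.basisSingleOne (R := ℂ) (ι := ℕ × ℕ)).linearIndependent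
  ext1 p
  simp [rep_monomial_single_zero]

end PolDisc

theorem polDisc_monomial_basis_general (q : ℝ) :
    ∃ B : Module.Basis (ℕ × ℕ) ℂ (PolDisc q),
      ∀ p : ℕ × ℕ, B p = zGen q ^ p.1 * wGen q ^ p.2 :=
  ⟨.mk (PolDisc.linearIndependent_monomial q) (PolDisc.span_monomial q).ge,
    Module.Basis.mk_apply _ _⟩

/-- The monomials `z^k w^j`, `k, j ∈ ℕ`, form a basis of `Pol(ℂ)_q` over `ℂ`. -/
theorem polDisc_monomial_basis (q : ℝ) (hq0 : 0 < q) (hq1 : q < 1) :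
    ∃ B : Module.Basis (ℕ × ℕ) ℂ (PolDisc q),
      ∀ p : ℕ × ℕ, B p = zGen q ^ p.1 * wGen q ^ p.2 :=
  polDisc_monomial_basis_general q
end
end

section
/- Let H be a nonzero complex Hilbert space and A a bounded linear operator on H satisfying A*A = q² A A* + (1 − q²)·I. Then the spectrum of the self-adjoint operator Y = I − A A* is contained in the set {q^{2n} : n ∈ ℕ} ∪ {0}. -/
/-!
With `Y = 1 - A A†` the relation reads `1 - A† A = q² Y`. Since `A A†` and `A† A` have the same
nonzero spectrum, every `μ ≠ 1` in `σ(Y)` yields `μ / q² ∈ σ(Y)`. A nonzero `μ` that is not a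
power of `q²` could therefore be divided by `q²` indefinitely, and `σ(Y)` would be unbounded.
-/

noncomputable section

open ContinuousLinearMap

namespace spectrum

variable {𝕜 A : Type*} [Field 𝕜] [Ring A] [Algebra 𝕜 A]

theorem mem_one_sub_iff {a : A} {r : 𝕜} :
    r ∈ spectrum 𝕜 (1 - a) ↔ 1 - r ∈ spectrum 𝕜 a := by
  rw [← map_one (algebraMap 𝕜 A), ← singleton_sub_eq, Set.singleton_sub, Set.mem_image]
  constructor
  · rintro ⟨s, hs, rfl⟩
    rwa [sub_sub_cancel]
  · exact fun h => ⟨1 - r, h, sub_sub_cancel 1 r⟩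

theorem mem_one_sub_mul_comm {a b : A} {r : 𝕜} (hr : r ≠ 1) :
    r ∈ spectrum 𝕜 (1 - a * b) ↔ r ∈ spectrum 𝕜 (1 - b * a) := by
  rw [mem_one_sub_iff, mem_one_sub_iff]
  exact unit_mem_mul_comm (r := Units.mk0 (1 - r) (sub_ne_zero.mpr hr.symm))

theorem div_mem_of_mem_smul {a : A} {r c : 𝕜} (hc : c ≠ 0)
    (h : r ∈ spectrum 𝕜 (c • a)) : r / c ∈ spectrum 𝕜 a := by
  rw [← smul_mem_smul_iff (r := Units.mk0 c hc)]
  simpa [Units.smul_def, mul_div_cancel₀ r hc] using h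

end spectrum

theorem subset_insert_zero_range_pow_of_div_mem {𝕜 : Type*} [NormedField 𝕜] {S : Set 𝕜}
    (hS : Bornology.IsBounded S) {c : 𝕜} (hc0 : c ≠ 0) (hc1 : ‖c‖ < 1)
    (hdiv : ∀ μ ∈ S, μ ≠ 1 → μ / c ∈ S) :
    S ⊆ insert 0 (Set.range fun n : ℕ => c ^ n) := by
  intro μ hμ
  by_contra hout
  simp only [Set.mem_insert_iff, Set.mem_range, not_or, not_exists] at hout
  obtain ⟨hμ0, hμpow⟩ := hout
  have hmem : ∀ n : ℕ, μ / c ^ n ∈ S := by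
    intro n
    induction n with
    | zero => simpa using hμ
    | succ n ih =>
      have hne : μ / c ^ n ≠ 1 := fun h =>
        hμpow n ((div_eq_one_iff_eq (pow_ne_zero n hc0)).mp h).symm
      simpa [pow_succ, div_div] using hdiv _ ih hne
  have hgrow : Filter.Tendsto (fun n : ℕ => ‖μ / c ^ n‖) Filter.atTop Filter.atTop := by
    have hinv : 1 < ‖c⁻¹‖ := by
      rw [norm_inv]
      exact (one_lt_inv₀ (norm_pos_iff.mpr hc0)).mpr hc1
    refine ((tendsto_pow_atTop_atTop_of_one_lt hinv).const_mul_atTop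
      (norm_pos_iff.mpr hμ0)).congr fun n => ?_
    rw [div_eq_mul_inv, norm_mul, ← inv_pow, norm_pow]
  obtain ⟨C, hC⟩ := isBounded_iff_forall_norm_le.mp hS
  obtain ⟨n, hn⟩ := (hgrow.eventually_gt_atTop C).exists
  exact (hC _ (hmem n)).not_gt hn

theorem quantum_disc_Y_spectrum_subset_general (q : ℝ) (hq0 : 0 < q) (hq1 : q < 1)
    {H : Type*} [NormedAddCommGroup H] [InnerProductSpace ℂ H] [CompleteSpace H]
    (A : H →L[ℂ] H)
    (hA : (ContinuousLinearMap.adjoint A) ∘L A =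
      ((q : ℂ) ^ 2) • (A ∘L ContinuousLinearMap.adjoint A) +
        ((1 : ℂ) - (q : ℂ) ^ 2) • (1 : H →L[ℂ] H)) :
    spectrum ℂ (1 - A ∘L ContinuousLinearMap.adjoint A) ⊆
      insert (0 : ℂ) (Set.range fun n : ℕ => ((q : ℂ) ^ (2 * n))) := by
  have hc0 : (q : ℂ) ^ 2 ≠ 0 := pow_ne_zero 2 (Complex.ofReal_ne_zero.mpr hq0.ne')
  have hc1 : ‖(q : ℂ) ^ 2‖ < 1 := by
    rw [norm_pow, Complex.norm_real, Real.norm_of_nonneg hq0.le]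
    nlinarith
  have hdual : 1 - adjoint A ∘L A = (q : ℂ) ^ 2 • (1 - A ∘L adjoint A) := by
    rw [hA]; module
  simp only [pow_mul]
  refine subset_insert_zero_range_pow_of_div_mem (spectrum.isBounded _) hc0 hc1 ?_
  intro μ hμ hμ1
  exact spectrum.div_mem_of_mem_smul hc0 (hdual ▸ (spectrum.mem_one_sub_mul_comm hμ1).mp hμ)

theorem quantum_disc_Y_spectrum_subset (q : ℝ) (hq0 : 0 < q) (hq1 : q < 1)
    {H : Type*} [NormedAddCommGroup H] [InnerProductSpace ℂ H] [CompleteSpace H]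
    [Nontrivial H]
    (A : H →L[ℂ] H)
    (hA : (ContinuousLinearMap.adjoint A) ∘L A =
      ((q : ℂ) ^ 2) • (A ∘L ContinuousLinearMap.adjoint A) +
        ((1 : ℂ) - (q : ℂ) ^ 2) • (1 : H →L[ℂ] H)) :
    spectrum ℂ (1 - A ∘L ContinuousLinearMap.adjoint A) ⊆
      insert (0 : ℂ) (Set.range fun n : ℕ => ((q : ℂ) ^ (2 * n))) :=
  quantum_disc_Y_spectrum_subset_general q hq0 hq1 A hA
end
end

section
/- Let H be a nonzero complex Hilbert space and A a bounded linear operator on H satisfying A*A = q² A A* + (1 − q²)·I. Assume A A* ≠ I and that the only closed subspaces of H invariant under both A and A* are {0} and H. Then there is a unitary operator U : ℓ²(ℕ, ℂ) → H such that A U = U T, i.e. the representation determined by A is unitarily equivalent to the Fock representation. -/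
noncomputable section

open ContinuousLinearMap

/-!
Put `X = 1 - A A†` (`defect A` below). The relation gives `X A = q² A X` and
`‖A x‖² = q² ‖A† x‖² + (1 - q²) ‖x‖²`, so `A` is bounded below and has closed range. If `A` were
onto it would be invertible, and `X = q² A X A⁻¹` would give `σ(X) = q² σ(X)`; for the self-adjoint
`X` this forces `‖X‖ = r(X) = 0`, i.e. `A A† = 1`. Hence `ker A† = (range A)ᗮ` contains a unit
vector `v`. The normalised vectors `A^n v` are eigenvectors of `X` for the distinct eigenvalues
`q^(2n)`, hence orthonormal, and `A`, `A†` act on them by the weighted shifts of the Fock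
representation. Their closed span is therefore invariant under `A` and `A†`, so by irreducibility
they form a Hilbert basis of `H`, and sending `fockBasis n` to the `n`-th of them is the unitary.
-/

open scoped Pointwise lp

theorem IsSelfAdjoint.eq_zero_of_eq_smul_conj {A : Type*} [CStarAlgebra A] {a : A}
    (ha : IsSelfAdjoint a) (u : Aˣ) {c : ℂ} (hc : ‖c‖ < 1) (h : a = c • (u * a * ↑u⁻¹)) :
    a = 0 := by
  nontriviality A
  rcases eq_or_ne c 0 with rfl | hc0
  · simpa using h
  have hspec : spectrum ℂ a = c • spectrum ℂ a := by
    conv_lhs => rw [h]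
    simpa using spectrum.unit_smul_eq_smul (u * a * ↑u⁻¹) (Units.mk0 c hc0)
  have hle : ‖a‖₊ ≤ ‖c‖₊ * ‖a‖₊ := by
    rw [← ENNReal.coe_le_coe, ← ha.spectralRadius_eq_nnnorm]
    refine iSup₂_le fun μ hμ => ?_
    rw [hspec] at hμ
    obtain ⟨ν, hν, rfl⟩ := hμ
    rw [nnnorm_smul, ENNReal.coe_le_coe]
    gcongr
    exact spectrum.norm_le_norm_of_mem hν
  rw [← nnnorm_eq_zero]
  by_contra hne
  exact (mul_lt_of_lt_one_left (pos_iff_ne_zero.2 hne) hc).not_ge hle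

theorem HilbertBasis.apply_repr_symm_of_apply_basis {ι 𝕜 E : Type*} [DecidableEq ι] [RCLike 𝕜]
    [NormedAddCommGroup E] [InnerProductSpace 𝕜 E] (b : HilbertBasis ι 𝕜 E) (A : E →L[𝕜] E)
    (S : ℓ²(ι, 𝕜) →L[𝕜] ℓ²(ι, 𝕜)) (h : ∀ i, A (b i) = b.repr.symm (S (lp.single 2 i 1)))
    (w : ℓ²(ι, 𝕜)) : A (b.repr.symm w) = b.repr.symm (S w) := by
  let U : ℓ²(ι, 𝕜) →L[𝕜] E := b.repr.symm.toContinuousLinearEquiv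
  suffices A ∘L U = U ∘L S from congr($this w)
  refine lp.ext_continuousLinearMap ENNReal.ofNat_ne_top fun i => ?_
  ext1
  simp [U, h]

theorem Submodule.mapsTo_topologicalClosure {R M : Type*} [Semiring R] [AddCommMonoid M]
    [Module R M] [TopologicalSpace M] [ContinuousAdd M] [ContinuousConstSMul R M]
    (S : Submodule R M) {f : M → M} (hf : Continuous f) (h : Set.MapsTo f S S) :
    Set.MapsTo f S.topologicalClosure S.topologicalClosure := by
  simpa only [Submodule.topologicalClosure_coe] using h.closure hf

section QuantumDisc

variable {q : ℝ}

def fockWeight (q : ℝ) (n : ℕ) : ℝ := √(1 - q ^ (2 * (n + 1)))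

theorem pow_two_mul_succ_lt_one (hq : q ^ 2 < 1) (n : ℕ) : q ^ (2 * (n + 1)) < 1 := by
  rw [pow_mul]
  exact pow_lt_one₀ (sq_nonneg q) hq n.succ_ne_zero

theorem fockWeight_pos (hq : q ^ 2 < 1) (n : ℕ) : 0 < fockWeight q n :=
  Real.sqrt_pos.2 (sub_pos.2 (pow_two_mul_succ_lt_one hq n))

theorem fockWeight_sq (hq : q ^ 2 < 1) (n : ℕ) : fockWeight q n ^ 2 = 1 - q ^ 2 * q ^ (2 * n) := by
  rw [fockWeight, Real.sq_sqrt (sub_nonneg.2 (pow_two_mul_succ_lt_one hq n).le)]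
  ring

variable {H : Type*} [NormedAddCommGroup H] [InnerProductSpace ℂ H]

-- `fockVector q A v n = A^n v / ‖A^n v‖` when `A† v = 0` and `‖v‖ = 1`
def fockVector (q : ℝ) (A : H →L[ℂ] H) (v : H) : ℕ → H
  | 0 => v
  | n + 1 => (fockWeight q n : ℂ)⁻¹ • A (fockVector q A v n)

variable {A : H →L[ℂ] H} {v : H}

theorem apply_fockVector (hq : q ^ 2 < 1) (n : ℕ) :
    A (fockVector q A v n) = (fockWeight q n : ℂ) • fockVector q A v (n + 1) := by
  have : (fockWeight q n : ℂ) ≠ 0 := Complex.ofReal_ne_zero.2 (fockWeight_pos hq n).ne'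
  rw [fockVector, smul_smul, mul_inv_cancel₀ this, one_smul]

variable [CompleteSpace H]

def IsQuantumDiscOperator (q : ℝ) (A : H →L[ℂ] H) : Prop :=
  adjoint A ∘L A = ((q : ℂ) ^ 2) • (A ∘L adjoint A) + ((1 : ℂ) - (q : ℂ) ^ 2) • (1 : H →L[ℂ] H)

def defect (A : H →L[ℂ] H) : H →L[ℂ] H := 1 - A ∘L adjoint A

theorem isSelfAdjoint_defect (A : H →L[ℂ] H) : IsSelfAdjoint (defect A) :=
  (IsSelfAdjoint.one _).sub <| by rw [IsSelfAdjoint, star_eq_adjoint, adjoint_comp, adjoint_adjoint]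

theorem apply_adjoint_apply (A : H →L[ℂ] H) (x : H) : A (adjoint A x) = x - defect A x := by
  simp [defect]

theorem norm_adjoint_apply_sq_of_defect_apply {A : H →L[ℂ] H} {x : H} {μ : ℝ}
    (hx : defect A x = (μ : ℂ) • x) (hx1 : ‖x‖ = 1) : ‖adjoint A x‖ ^ 2 = 1 - μ := by
  rw [@norm_sq_eq_re_inner ℂ, adjoint_inner_left, apply_adjoint_apply, hx, inner_sub_right,
    inner_smul_right, inner_self_eq_norm_sq_to_K, hx1]
  simp

namespace IsQuantumDiscOperator

theorem adjoint_comp_self (hA : IsQuantumDiscOperator q A) :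
    adjoint A ∘L A = 1 - (q : ℂ) ^ 2 • defect A := by
  rw [hA, defect]
  module

theorem defect_mul (hA : IsQuantumDiscOperator q A) :
    defect A * A = (q : ℂ) ^ 2 • (A * defect A) := by
  have : defect A * A = A - A * (adjoint A ∘L A) := by
    rw [defect, ← mul_def, sub_mul, one_mul, mul_assoc, mul_def (adjoint A)]
  rw [this, hA.adjoint_comp_self, mul_sub, mul_one, mul_smul_comm, sub_sub_cancel]

theorem norm_apply_sq (hA : IsQuantumDiscOperator q A) (x : H) :
    ‖A x‖ ^ 2 = q ^ 2 * ‖adjoint A x‖ ^ 2 + (1 - q ^ 2) * ‖x‖ ^ 2 := by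
  rw [@norm_sq_eq_re_inner ℂ, ← adjoint_inner_right, ← comp_apply, hA]
  simp [inner_add_right, inner_smul_right, ← adjoint_inner_left, inner_self_eq_norm_sq_to_K, sq]

theorem exists_antilipschitz (hA : IsQuantumDiscOperator q A) (hq : q ^ 2 < 1) :
    ∃ K, AntilipschitzWith K A := by
  have hs : 0 < √(1 - q ^ 2) := Real.sqrt_pos.2 (by linarith)
  refine ⟨(√(1 - q ^ 2))⁻¹.toNNReal, A.antilipschitz_of_bound fun x => ?_⟩
  rw [Real.coe_toNNReal _ (by positivity), inv_mul_eq_div, le_div_iff₀' hs]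
  refine le_of_sq_le_sq ?_ (norm_nonneg _)
  rw [mul_pow, Real.sq_sqrt (by linarith), hA.norm_apply_sq]
  nlinarith [sq_nonneg ‖adjoint A x‖]

theorem defect_eq_zero_of_isUnit (hA : IsQuantumDiscOperator q A) (hq : q ^ 2 < 1)
    (hu : IsUnit A) : defect A = 0 := by
  obtain ⟨u, hu⟩ := hu
  have hq' : ‖(q : ℂ) ^ 2‖ < 1 := by simpa using (sq_lt_one_iff_abs_lt_one q).1 hq
  refine (isSelfAdjoint_defect A).eq_zero_of_eq_smul_conj u hq' ?_
  calc defect A = defect A * u * ↑u⁻¹ := by simp [mul_assoc]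
    _ = (q : ℂ) ^ 2 • (u * defect A * ↑u⁻¹) := by
      rw [hu, hA.defect_mul, smul_mul_assoc]

theorem range_ne_top (hA : IsQuantumDiscOperator q A) (hq : q ^ 2 < 1)
    (hAA : A ∘L adjoint A ≠ 1) : A.range ≠ ⊤ := by
  intro htop
  obtain ⟨K, hK⟩ := hA.exists_antilipschitz hq
  have hu : IsUnit A := isUnit_iff_bijective.2 ⟨hK.injective, LinearMap.range_eq_top.1 htop⟩
  have := hA.defect_eq_zero_of_isUnit hq hu
  rw [defect, sub_eq_zero] at this
  exact hAA this.symm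

theorem exists_norm_eq_one_adjoint_apply_eq_zero (hA : IsQuantumDiscOperator q A)
    (hq : q ^ 2 < 1) (hAA : A ∘L adjoint A ≠ 1) : ∃ v, ‖v‖ = 1 ∧ adjoint A v = 0 := by
  obtain ⟨K, hK⟩ := hA.exists_antilipschitz hq
  have : CompleteSpace A.range := (hK.isClosed_range A.uniformContinuous).completeSpace_coe
  have hne : A.rangeᗮ ≠ ⊥ := fun h => hA.range_ne_top hq hAA (Submodule.orthogonal_eq_bot_iff.1 h)
  rw [orthogonal_range] at hne
  obtain ⟨w, hw, hw0⟩ := Submodule.exists_mem_ne_zero_of_ne_bot hne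
  refine ⟨(‖w‖⁻¹ : ℂ) • w, norm_smul_inv_norm hw0, ?_⟩
  rw [map_smul, show adjoint A w = 0 from hw, smul_zero]

theorem defect_apply_apply (hA : IsQuantumDiscOperator q A) {x : H} {μ : ℝ}
    (hx : defect A x = (μ : ℂ) • x) : defect A (A x) = ((q ^ 2 * μ : ℝ) : ℂ) • A x := by
  rw [← mul_apply_eq_comp, hA.defect_mul, smul_apply, mul_apply_eq_comp, hx, map_smul, smul_smul]
  push_cast
  ring_nf

theorem adjoint_apply_apply (hA : IsQuantumDiscOperator q A) {x : H} {μ : ℝ}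
    (hx : defect A x = (μ : ℂ) • x) : adjoint A (A x) = ((1 - q ^ 2 * μ : ℝ) : ℂ) • x := by
  rw [← comp_apply, hA.adjoint_comp_self, sub_apply, one_apply_eq_self, smul_apply, hx]
  push_cast
  module

theorem norm_apply_sq_of_defect_apply (hA : IsQuantumDiscOperator q A) {x : H} {μ : ℝ}
    (hx : defect A x = (μ : ℂ) • x) (hx1 : ‖x‖ = 1) : ‖A x‖ ^ 2 = 1 - q ^ 2 * μ := by
  rw [hA.norm_apply_sq, norm_adjoint_apply_sq_of_defect_apply hx hx1, hx1]
  ring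

theorem defect_fockVector (hA : IsQuantumDiscOperator q A) (hv : adjoint A v = 0) (n : ℕ) :
    defect A (fockVector q A v n) = ((q ^ (2 * n) : ℝ) : ℂ) • fockVector q A v n := by
  induction n with
  | zero => simp [fockVector, defect, hv]
  | succ n ih =>
    rw [fockVector, map_smul, hA.defect_apply_apply ih, smul_comm]
    congr 2
    ring

theorem norm_fockVector (hA : IsQuantumDiscOperator q A) (hq : q ^ 2 < 1)
    (hv : adjoint A v = 0) (hv1 : ‖v‖ = 1) (n : ℕ) : ‖fockVector q A v n‖ = 1 := by
  induction n with
  | zero => exact hv1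
  | succ n ih =>
    have hw := fockWeight_pos hq n
    have hAe : ‖A (fockVector q A v n)‖ = fockWeight q n := by
      rw [← sq_eq_sq₀ (norm_nonneg _) hw.le, fockWeight_sq hq,
        hA.norm_apply_sq_of_defect_apply (hA.defect_fockVector hv n) ih]
    rw [fockVector, norm_smul, hAe, norm_inv, Complex.norm_real, Real.norm_of_nonneg hw.le,
      inv_mul_cancel₀ hw.ne']

theorem adjoint_fockVector_succ (hA : IsQuantumDiscOperator q A) (hq : q ^ 2 < 1)
    (hv : adjoint A v = 0) (n : ℕ) :
    adjoint A (fockVector q A v (n + 1)) = (fockWeight q n : ℂ) • fockVector q A v n := by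
  have hw : (fockWeight q n : ℂ) ≠ 0 := Complex.ofReal_ne_zero.2 (fockWeight_pos hq n).ne'
  rw [fockVector, map_smul, hA.adjoint_apply_apply (hA.defect_fockVector hv n), smul_smul,
    ← fockWeight_sq hq, Complex.ofReal_pow, sq, inv_mul_cancel_left₀ hw]

theorem orthonormal_fockVector (hA : IsQuantumDiscOperator q A) (hq0 : q ≠ 0) (hq : q ^ 2 < 1)
    (hv : adjoint A v = 0) (hv1 : ‖v‖ = 1) : Orthonormal ℂ (fockVector q A v) := by
  refine ⟨hA.norm_fockVector hq hv hv1, fun i j hij => ?_⟩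
  have hμ : ((q ^ (2 * i) : ℝ) : ℂ) ≠ ((q ^ (2 * j) : ℝ) : ℂ) := by
    rw [Ne, Complex.ofReal_inj, pow_mul, pow_mul]
    exact (pow_right_injective₀ (by positivity) hq.ne).ne hij
  have hmem : ∀ n, fockVector q A v n ∈
      Module.End.eigenspace (defect A : H →ₗ[ℂ] H) ((q ^ (2 * n) : ℝ) : ℂ) := fun n =>
    Module.End.mem_eigenspace_iff.2 (hA.defect_fockVector hv n)
  exact (isSelfAdjoint_defect A).isSymmetric.orthogonalFamily_eigenspaces hμ ⟨_, hmem i⟩ ⟨_, hmem j⟩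

theorem topologicalClosure_span_fockVector (hA : IsQuantumDiscOperator q A) (hq : q ^ 2 < 1)
    (hv : adjoint A v = 0) (hv1 : ‖v‖ = 1)
    (hirr : ∀ M : Submodule ℂ H, IsClosed (M : Set H) →
      (∀ x ∈ M, A x ∈ M) → (∀ x ∈ M, (adjoint A) x ∈ M) → M = ⊥ ∨ M = ⊤) :
    (Submodule.span ℂ (Set.range (fockVector q A v))).topologicalClosure = ⊤ := by
  set S := Submodule.span ℂ (Set.range (fockVector q A v))
  have hmem (n : ℕ) : fockVector q A v n ∈ S := Submodule.subset_span ⟨n, rfl⟩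
  have hinv (B : H →L[ℂ] H) (hB : ∀ n, B (fockVector q A v n) ∈ S) :
      Set.MapsTo B S.topologicalClosure S.topologicalClosure :=
    S.mapsTo_topologicalClosure B.continuous fun _ hx =>
      Submodule.span_le (p := S.comap (B : H →ₗ[ℂ] H)).2 (Set.range_subset_iff.2 hB) hx
  have hA_inv : ∀ n, A (fockVector q A v n) ∈ S := fun n => by
    rw [apply_fockVector hq]
    exact S.smul_mem _ (hmem _)
  have hAd_inv : ∀ n, adjoint A (fockVector q A v n) ∈ S
    | 0 => by rw [fockVector, hv]; exact S.zero_mem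
    | n + 1 => by rw [hA.adjoint_fockVector_succ hq hv]; exact S.smul_mem _ (hmem _)
  refine (hirr _ S.isClosed_topologicalClosure (hinv A hA_inv) (hinv _ hAd_inv)).resolve_left
    fun hbot => ?_
  have : v ∈ S.topologicalClosure := S.le_topologicalClosure (hmem 0)
  rw [hbot, Submodule.mem_bot] at this
  simp [this] at hv1

end IsQuantumDiscOperator

end QuantumDisc

theorem quantum_disc_fock_uniqueness_general (q : ℝ) (hq0 : 0 < q) (hq1 : q < 1)
    (T : lp (fun _ : ℕ => ℂ) 2 →L[ℂ] lp (fun _ : ℕ => ℂ) 2)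
    (hT : ∀ n : ℕ, T (fockBasis n) =
      (Real.sqrt (1 - q ^ (2 * (n + 1))) : ℂ) • fockBasis (n + 1))
    {H : Type} [NormedAddCommGroup H] [InnerProductSpace ℂ H] [CompleteSpace H]
    (A : H →L[ℂ] H)
    (hA : (ContinuousLinearMap.adjoint A) ∘L A =
      ((q : ℂ) ^ 2) • (A ∘L ContinuousLinearMap.adjoint A) +
        ((1 : ℂ) - (q : ℂ) ^ 2) • (1 : H →L[ℂ] H))
    (hAA : A ∘L ContinuousLinearMap.adjoint A ≠ 1)
    (hirr : ∀ M : Submodule ℂ H, IsClosed (M : Set H) →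
      (∀ x ∈ M, A x ∈ M) → (∀ x ∈ M, (ContinuousLinearMap.adjoint A) x ∈ M) →
      M = ⊥ ∨ M = ⊤) :
    ∃ U : lp (fun _ : ℕ => ℂ) 2 ≃ₗᵢ[ℂ] H, ∀ v, A (U v) = U (T v) := by
  replace hA : IsQuantumDiscOperator q A := hA
  have hq : q ^ 2 < 1 := by nlinarith
  obtain ⟨v, hv1, hv⟩ := hA.exists_norm_eq_one_adjoint_apply_eq_zero hq hAA
  let b := HilbertBasis.mk (hA.orthonormal_fockVector hq0.ne' hq hv hv1)
    (hA.topologicalClosure_span_fockVector hq hv hv1 hirr).ge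
  refine ⟨b.repr.symm, b.apply_repr_symm_of_apply_basis A T fun n => ?_⟩
  change _ = b.repr.symm (T (fockBasis n))
  rw [hT n, map_smul, fockBasis, b.repr_symm_single, HilbertBasis.coe_mk, apply_fockVector hq]
  rfl

/-- Any irreducible bounded `*`-representation of the quantum disc relation with
`A A* ≠ I` is unitarily equivalent to the Fock representation. -/
theorem quantum_disc_fock_uniqueness (q : ℝ) (hq0 : 0 < q) (hq1 : q < 1)
    (T : lp (fun _ : ℕ => ℂ) 2 →L[ℂ] lp (fun _ : ℕ => ℂ) 2)
    (hT : ∀ n : ℕ, T (fockBasis n) =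
      (Real.sqrt (1 - q ^ (2 * (n + 1))) : ℂ) • fockBasis (n + 1))
    {H : Type} [NormedAddCommGroup H] [InnerProductSpace ℂ H] [CompleteSpace H]
    [Nontrivial H]
    (A : H →L[ℂ] H)
    (hA : (ContinuousLinearMap.adjoint A) ∘L A =
      ((q : ℂ) ^ 2) • (A ∘L ContinuousLinearMap.adjoint A) +
        ((1 : ℂ) - (q : ℂ) ^ 2) • (1 : H →L[ℂ] H))
    (hAA : A ∘L ContinuousLinearMap.adjoint A ≠ 1)
    (hirr : ∀ M : Submodule ℂ H, IsClosed (M : Set H) →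
      (∀ x ∈ M, A x ∈ M) → (∀ x ∈ M, (ContinuousLinearMap.adjoint A) x ∈ M) →
      M = ⊥ ∨ M = ⊤) :
    ∃ U : lp (fun _ : ℕ => ℂ) 2 ≃ₗᵢ[ℂ] H, ∀ v, A (U v) = U (T v) :=
  quantum_disc_fock_uniqueness_general q hq0 hq1 T hT A hA hAA hirr

end
end

section
/- There exists a unique conjugate-linear, involutive antiautomorphism * of the ℂ-algebra ℂ[SL₂]_q satisfying t₁₁* = −t₂₂, t₁₂* = −q t₂₁, t₂₁* = −q^{−1} t₁₂, t₂₂* = −t₁₁; i.e. these formulas on the generators extend to a star-algebra structure on ℂ[SL₂]_q (the algebra ℂ[w₀SU₁,₁]_q of regular functions on the quantum principal homogeneous space w₀SU₁,₁). -/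
noncomputable section

namespace QuantumSL2

/-- The free algebra on the four generators `t₁₁, t₁₂, t₂₁, t₂₂` (indexed by `Fin 4`). -/
abbrev F4 := FreeAlgebra ℂ (Fin 4)

/-- The free generator corresponding to `t₁₁`. -/
def a : F4 := FreeAlgebra.ι ℂ 0
/-- The free generator corresponding to `t₁₂`. -/
def b : F4 := FreeAlgebra.ι ℂ 1
/-- The free generator corresponding to `t₂₁`. -/
def c : F4 := FreeAlgebra.ι ℂ 2
/-- The free generator corresponding to `t₂₂`. -/
def d : F4 := FreeAlgebra.ι ℂ 3

/-- The defining relations of the quantum group algebra `ℂ[SL₂]_q`. -/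
inductive SLRel (q : ℝ) : F4 → F4 → Prop
  | r1 : SLRel q (a * b) ((q : ℂ) • (b * a))
  | r2 : SLRel q (a * c) ((q : ℂ) • (c * a))
  | r3 : SLRel q (b * d) ((q : ℂ) • (d * b))
  | r4 : SLRel q (c * d) ((q : ℂ) • (d * c))
  | r5 : SLRel q (b * c) (c * b)
  | r6 : SLRel q (a * d - d * a) (((q : ℂ) - (q : ℂ)⁻¹) • (b * c))
  | r7 : SLRel q (a * d - (q : ℂ) • (b * c)) 1

/-- The quantum group algebra `ℂ[SL₂]_q`. -/
abbrev SL2q (q : ℝ) := RingQuot (SLRel q)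

/-- The generator `t₁₁` of `ℂ[SL₂]_q`. -/
def t11 (q : ℝ) : SL2q q := RingQuot.mkAlgHom ℂ (SLRel q) a
/-- The generator `t₁₂` of `ℂ[SL₂]_q`. -/
def t12 (q : ℝ) : SL2q q := RingQuot.mkAlgHom ℂ (SLRel q) b
/-- The generator `t₂₁` of `ℂ[SL₂]_q`. -/
def t21 (q : ℝ) : SL2q q := RingQuot.mkAlgHom ℂ (SLRel q) c
/-- The generator `t₂₂` of `ℂ[SL₂]_q`. -/
def t22 (q : ℝ) : SL2q q := RingQuot.mkAlgHom ℂ (SLRel q) d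

end QuantumSL2

/-!
The formulas define a conjugate-linear antihomomorphism out of the free algebra on the four
generators. Because `q` is real, the images of the generators satisfy the defining relations again
in the opposite algebra, so the map descends to `ℂ[SL₂]_q`. A conjugate-linear antihomomorphism
is determined by its values on generators and at `1`, and the value at `1` is forced by the quantum
determinant relation `t₁₁t₂₂ − q t₁₂t₂₁ = 1`: this gives uniqueness, and the same induction over
the generators shows that the map is involutive.
-/

open MulOpposite

namespace QuantumSL2

section SemilinearLift

variable {R A X : Type*} [CommSemiring R] [Semiring A] [Algebra R A]

def semilinearLift (σ : R →+* R) (f : X → A) : FreeAlgebra R X →+* A :=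
  (MonoidAlgebra.liftNCRingHom ((algebraMap R A).comp σ) (FreeMonoid.lift f)
      fun r _ ↦ Algebra.commute_algebraMap_left (σ r) _).comp
    (FreeAlgebra.equivMonoidAlgebraFreeMonoid : FreeAlgebra R X ≃ₐ[R] _).toRingHom

@[simp]
theorem semilinearLift_ι (σ : R →+* R) (f : X → A) (x : X) :
    semilinearLift σ f (FreeAlgebra.ι R x) = f x := by
  simp [semilinearLift, FreeAlgebra.equivMonoidAlgebraFreeMonoid, MonoidAlgebra.liftNCRingHom,
    MonoidAlgebra.of_apply, MonoidAlgebra.liftNC_single]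

@[simp]
theorem semilinearLift_algebraMap (σ : R →+* R) (f : X → A) (r : R) :
    semilinearLift σ f (algebraMap R _ r) = algebraMap R A (σ r) := by
  simp [semilinearLift, MonoidAlgebra.liftNCRingHom, MonoidAlgebra.coe_algebraMap,
    MonoidAlgebra.liftNC_single]

@[simp]
theorem semilinearLift_smul (σ : R →+* R) (f : X → A) (r : R) (x : FreeAlgebra R X) :
    semilinearLift σ f (r • x) = σ r • semilinearLift σ f x := by
  rw [Algebra.smul_def, map_mul, semilinearLift_algebraMap, ← Algebra.smul_def]

end SemilinearLift

section ConjAntiHom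

variable {A B : Type*} [Ring A] [Algebra ℂ A] [Ring B] [Algebra ℂ B]

structure IsConjAntiHom (s : A → B) : Prop where
  map_add : ∀ x y, s (x + y) = s x + s y
  map_smul : ∀ (r : ℂ) x, s (r • x) = starRingEnd ℂ r • s x
  map_mul : ∀ x y, s (x * y) = s y * s x

theorem isConjAntiHom_unop_comp (φ : A →+* Bᵐᵒᵖ)
    (hφ : ∀ r : ℂ, φ (algebraMap ℂ A r) = op (algebraMap ℂ B (starRingEnd ℂ r))) :
    IsConjAntiHom (fun x ↦ unop (φ x)) where
  map_add x y := by simp only [map_add, unop_add]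
  map_smul r x := by
    rw [Algebra.smul_def, map_mul, hφ, unop_mul, unop_op, ← Algebra.commutes,
      ← Algebra.smul_def]
  map_mul x y := by simp only [map_mul, unop_mul]

namespace IsConjAntiHom

variable {s s' : A → B}

theorem map_sub (hs : IsConjAntiHom s) (x y : A) : s (x - y) = s x - s y :=
  (AddMonoidHom.mk' s hs.map_add).map_sub x y

theorem map_neg (hs : IsConjAntiHom s) (x : A) : s (-x) = -s x :=
  (AddMonoidHom.mk' s hs.map_add).map_neg x

theorem map_algebraMap (hs : IsConjAntiHom s) (r : ℂ) :
    s (algebraMap ℂ A r) = starRingEnd ℂ r • s 1 := by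
  rw [Algebra.algebraMap_eq_smul_one, hs.map_smul]

theorem eq_of_eqOn_of_adjoin_eq_top (hs : IsConjAntiHom s) (hs' : IsConjAntiHom s') {S : Set A}
    (hS : Algebra.adjoin ℂ S = ⊤) (h1 : s 1 = s' 1) (hSs : Set.EqOn s s' S) : s = s' := by
  funext x
  have hx : x ∈ Algebra.adjoin ℂ S := hS ▸ Algebra.mem_top
  induction hx using Algebra.adjoin_induction with
  | mem x hx => exact hSs hx
  | algebraMap r => rw [hs.map_algebraMap, hs'.map_algebraMap, h1]
  | add x y _ _ hx hy => rw [hs.map_add, hs'.map_add, hx, hy]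
  | mul x y _ _ hx hy => rw [hs.map_mul, hs'.map_mul, hx, hy]

theorem involutive_of_adjoin_eq_top {s : A → A} (hs : IsConjAntiHom s) {S : Set A}
    (hS : Algebra.adjoin ℂ S = ⊤) (h1 : s 1 = 1) (hSs : ∀ x ∈ S, s (s x) = x) :
    Function.Involutive s := by
  intro x
  have hx : x ∈ Algebra.adjoin ℂ S := hS ▸ Algebra.mem_top
  induction hx using Algebra.adjoin_induction with
  | mem x hx => exact hSs x hx
  | algebraMap r =>
    rw [hs.map_algebraMap, h1, hs.map_smul, h1, Complex.conj_conj, Algebra.algebraMap_eq_smul_one]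
  | add x y _ _ hx hy => rw [hs.map_add, hs.map_add, hx, hy]
  | mul x y _ _ hx hy => rw [hs.map_mul, hs.map_mul, hx, hy]

end IsConjAntiHom

end ConjAntiHom

structure SatisfiesRelations {A : Type*} [Ring A] [Algebra ℂ A] (q : ℝ) (x11 x12 x21 x22 : A) :
    Prop where
  r1 : x11 * x12 = (q : ℂ) • (x12 * x11)
  r2 : x11 * x21 = (q : ℂ) • (x21 * x11)
  r3 : x12 * x22 = (q : ℂ) • (x22 * x12)
  r4 : x21 * x22 = (q : ℂ) • (x22 * x21)
  r5 : x12 * x21 = x21 * x12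
  r6 : x11 * x22 - x22 * x11 = ((q : ℂ) - (q : ℂ)⁻¹) • (x12 * x21)
  r7 : x11 * x22 - (q : ℂ) • (x12 * x21) = 1

theorem SatisfiesRelations.star {A : Type*} [Ring A] [Algebra ℂ A] {q : ℝ} (hq : q ≠ 0)
    {x11 x12 x21 x22 : A} (h : SatisfiesRelations q x11 x12 x21 x22) :
    SatisfiesRelations q (op (-x22)) (op ((-(q : ℂ)) • x21)) (op ((-(q : ℂ)⁻¹) • x12))
      (op (-x11)) := by
  have hq' : (q : ℂ) ≠ 0 := Complex.ofReal_ne_zero.mpr hq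
  constructor <;> apply unop_injective <;>
    simp only [unop_mul, unop_sub, unop_smul, unop_op, unop_one, smul_mul_assoc, mul_smul_comm,
      neg_mul, mul_neg, neg_neg, neg_smul, smul_smul]
  case r1 => linear_combination (norm := module) (q : ℂ) • h.r4
  case r2 =>
    linear_combination (norm := (match_scalars <;> field_simp <;> ring)) (q : ℂ)⁻¹ • h.r3
  case r3 => linear_combination (norm := module) (q : ℂ) • h.r2
  case r4 =>
    linear_combination (norm := (match_scalars <;> field_simp <;> ring)) (q : ℂ)⁻¹ • h.r1
  case r5 => linear_combination (norm := (match_scalars <;> field_simp <;> ring)) h.r5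
  case r6 => linear_combination (norm := (match_scalars <;> field_simp <;> ring)) h.r6
  case r7 => linear_combination (norm := (match_scalars <;> field_simp <;> ring)) h.r7

theorem satisfiesRelations_generators (q : ℝ) :
    SatisfiesRelations q (t11 q) (t12 q) (t21 q) (t22 q) := by
  have rel {x y : F4} (h : SLRel q x y) := RingQuot.mkAlgHom_rel ℂ h
  constructor <;> simp only [t11, t12, t21, t22, ← map_mul, ← map_smul, ← map_sub]
  exacts [rel .r1, rel .r2, rel .r3, rel .r4, rel .r5, rel .r6, (rel .r7).trans (map_one _)]

theorem adjoin_generators (q : ℝ) : Algebra.adjoin ℂ {t11 q, t12 q, t21 q, t22 q} = ⊤ := by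
  have : {t11 q, t12 q, t21 q, t22 q} =
      RingQuot.mkAlgHom ℂ (SLRel q) '' Set.range (FreeAlgebra.ι ℂ) := by
    ext x
    simp [Fin.exists_fin_succ, t11, t12, t21, t22, a, b, c, d, eq_comm]
  rw [this, Algebra.adjoin_image, FreeAlgebra.adjoin_range_ι, Algebra.map_top,
    AlgHom.range_eq_top]
  exact RingQuot.mkAlgHom_surjective ℂ (SLRel q)

section Star

variable {q : ℝ}

theorem IsConjAntiHom.map_one_eq_one {s : SL2q q → SL2q q} (hq : q ≠ 0) (hs : IsConjAntiHom s)
    (h11 : s (t11 q) = -(t22 q)) (h12 : s (t12 q) = (-(q : ℂ)) • t21 q)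
    (h21 : s (t21 q) = (-(q : ℂ)⁻¹) • t12 q) (h22 : s (t22 q) = -(t11 q)) : s 1 = 1 := by
  have hdet := congrArg unop ((satisfiesRelations_generators q).star hq).r7
  simp only [unop_sub, unop_mul, unop_smul, unop_op, unop_one] at hdet
  calc s 1 = s (t11 q * t22 q - (q : ℂ) • (t12 q * t21 q)) := by
        rw [(satisfiesRelations_generators q).r7]
    _ = 1 := by
        rw [hs.map_sub, hs.map_mul, hs.map_smul, hs.map_mul, Complex.conj_ofReal, h11, h12, h21,
          h22, hdet]

variable (q) in
def starGen : Fin 4 → (SL2q q)ᵐᵒᵖ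
  | 0 => op (-(t22 q))
  | 1 => op ((-(q : ℂ)) • t21 q)
  | 2 => op ((-(q : ℂ)⁻¹) • t12 q)
  | 3 => op (-(t11 q))

theorem semilinearLift_starGen_rel (hq : q ≠ 0) ⦃x y : F4⦄ (h : SLRel q x y) :
    semilinearLift (starRingEnd ℂ) (starGen q) x =
      semilinearLift (starRingEnd ℂ) (starGen q) y := by
  have hstar := (satisfiesRelations_generators q).star hq
  induction h <;>
    simp only [a, b, c, d, map_mul, map_sub, map_one, semilinearLift_smul, semilinearLift_ι,
      Complex.conj_ofReal, map_inv₀]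
  exacts [hstar.r1, hstar.r2, hstar.r3, hstar.r4, hstar.r5, hstar.r6, hstar.r7]

def starHom (hq : q ≠ 0) : SL2q q →+* (SL2q q)ᵐᵒᵖ :=
  RingQuot.lift ⟨_, semilinearLift_starGen_rel hq⟩

def starMap (hq : q ≠ 0) (x : SL2q q) : SL2q q := unop (starHom hq x)

theorem starMap_mkAlgHom (hq : q ≠ 0) (x : F4) :
    starMap hq (RingQuot.mkAlgHom ℂ (SLRel q) x) =
      unop (semilinearLift (starRingEnd ℂ) (starGen q) x) := by
  have h := RingQuot.lift_mkRingHom_apply _ (semilinearLift_starGen_rel hq) x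
  rw [← RingQuot.mkAlgHom_coe ℂ] at h
  exact congrArg unop h

theorem isConjAntiHom_starMap (hq : q ≠ 0) : IsConjAntiHom (starMap hq) :=
  isConjAntiHom_unop_comp (starHom hq) fun r ↦ unop_injective <| by
    rw [← (RingQuot.mkAlgHom ℂ (SLRel q)).commutes r]
    exact (starMap_mkAlgHom hq _).trans <| by
      rw [semilinearLift_algebraMap, MulOpposite.algebraMap_apply]

theorem starMap_one (hq : q ≠ 0) : starMap hq 1 = 1 := by
  simp only [starMap, map_one, unop_one]

theorem starMap_t11 (hq : q ≠ 0) : starMap hq (t11 q) = -(t22 q) :=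
  starMap_mkAlgHom hq a |>.trans (congrArg unop (semilinearLift_ι _ _ _))

theorem starMap_t12 (hq : q ≠ 0) : starMap hq (t12 q) = (-(q : ℂ)) • t21 q :=
  starMap_mkAlgHom hq b |>.trans (congrArg unop (semilinearLift_ι _ _ _))

theorem starMap_t21 (hq : q ≠ 0) : starMap hq (t21 q) = (-(q : ℂ)⁻¹) • t12 q :=
  starMap_mkAlgHom hq c |>.trans (congrArg unop (semilinearLift_ι _ _ _))

theorem starMap_t22 (hq : q ≠ 0) : starMap hq (t22 q) = -(t11 q) :=
  starMap_mkAlgHom hq d |>.trans (congrArg unop (semilinearLift_ι _ _ _))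

theorem starMap_involutive (hq : q ≠ 0) : Function.Involutive (starMap hq) := by
  have hs := isConjAntiHom_starMap hq
  have hq' : (q : ℂ) ≠ 0 := Complex.ofReal_ne_zero.mpr hq
  refine hs.involutive_of_adjoin_eq_top (adjoin_generators q) (starMap_one hq) ?_
  rintro x (rfl | rfl | rfl | rfl)
  · rw [starMap_t11, hs.map_neg, starMap_t22, neg_neg]
  · rw [starMap_t12, hs.map_smul, starMap_t21, smul_smul, map_neg, Complex.conj_ofReal,
      neg_mul_neg, mul_inv_cancel₀ hq', one_smul]
  · rw [starMap_t21, hs.map_smul, starMap_t12, smul_smul, map_neg, map_inv₀, Complex.conj_ofReal,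
      neg_mul_neg, inv_mul_cancel₀ hq', one_smul]
  · rw [starMap_t22, hs.map_neg, starMap_t11, neg_neg]

theorem IsConjAntiHom.eq_starMap {s : SL2q q → SL2q q} (hq : q ≠ 0) (hs : IsConjAntiHom s)
    (h11 : s (t11 q) = -(t22 q)) (h12 : s (t12 q) = (-(q : ℂ)) • t21 q)
    (h21 : s (t21 q) = (-(q : ℂ)⁻¹) • t12 q) (h22 : s (t22 q) = -(t11 q)) :
    s = starMap hq := by
  refine hs.eq_of_eqOn_of_adjoin_eq_top (isConjAntiHom_starMap hq) (adjoin_generators q)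
    ((hs.map_one_eq_one hq h11 h12 h21 h22).trans (starMap_one hq).symm) ?_
  rintro x (rfl | rfl | rfl | rfl)
  exacts [h11.trans (starMap_t11 hq).symm, h12.trans (starMap_t12 hq).symm,
    h21.trans (starMap_t21 hq).symm, h22.trans (starMap_t22 hq).symm]

end Star

end QuantumSL2

open QuantumSL2

theorem sl2q_star_structure_general (q : ℝ) (hq0 : 0 < q) :
    ∃! s : SL2q q → SL2q q,
      (∀ x y, s (x + y) = s x + s y) ∧
      (∀ (r : ℂ) (x), s (r • x) = (starRingEnd ℂ r) • s x) ∧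
      (∀ x y, s (x * y) = s y * s x) ∧
      (∀ x, s (s x) = x) ∧
      s (t11 q) = -(t22 q) ∧
      s (t12 q) = (-(q : ℂ)) • t21 q ∧
      s (t21 q) = (-(q : ℂ)⁻¹) • t12 q ∧
      s (t22 q) = -(t11 q) := by
  have hq := hq0.ne'
  have hstar := isConjAntiHom_starMap hq
  refine ⟨starMap hq, ⟨hstar.map_add, hstar.map_smul, hstar.map_mul, starMap_involutive hq,
    starMap_t11 hq, starMap_t12 hq, starMap_t21 hq, starMap_t22 hq⟩, ?_⟩
  rintro s ⟨hadd, hsmul, hmul, -, h11, h12, h21, h22⟩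
  exact IsConjAntiHom.eq_starMap hq ⟨hadd, hsmul, hmul⟩ h11 h12 h21 h22

/-- There is a unique conjugate-linear involutive antiautomorphism `*` of `ℂ[SL₂]_q`
with `t₁₁* = −t₂₂`, `t₁₂* = −q t₂₁`, `t₂₁* = −q⁻¹ t₁₂`, `t₂₂* = −t₁₁`. -/
theorem sl2q_star_structure (q : ℝ) (hq0 : 0 < q) (hq1 : q < 1) :
    ∃! s : SL2q q → SL2q q,
      (∀ x y, s (x + y) = s x + s y) ∧
      (∀ (r : ℂ) (x), s (r • x) = (starRingEnd ℂ r) • s x) ∧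
      (∀ x y, s (x * y) = s y * s x) ∧
      (∀ x, s (s x) = x) ∧
      s (t11 q) = -(t22 q) ∧
      s (t12 q) = (-(q : ℂ)) • t21 q ∧
      s (t21 q) = (-(q : ℂ)⁻¹) • t12 q ∧
      s (t22 q) = -(t11 q) :=
  sl2q_star_structure_general q hq0
end
end

section
/- There exists a unique ℂ-algebra automorphism σ of ℂ[SL₂]_q with σ(t₁₁) = q² t₁₁, σ(t₁₂) = t₁₂, σ(t₂₁) = t₂₁, σ(t₂₂) = q^{−2} t₂₂, and it satisfies r·x = x·σ(r) for every r ∈ ℂ[SL₂]_q, where x = −q t₁₂ t₂₁. (In particular the multiplicative set of powers of x satisfies the two-sided Ore condition: for every r and n there exist r′, r″ with r xⁿ = xⁿ r′ and xⁿ r = r″ xⁿ.) -/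
noncomputable section

open QuantumSL2

/-!
The automorphism `σ` is the action of the torus element `diag(q², q⁻²)`: every defining
relation is homogeneous for the grading `deg t₁₁ = 1`, `deg t₂₂ = -1`, `deg t₁₂ = deg t₂₁ = 0`,
so `t₁₁ ↦ u t₁₁`, `t₂₂ ↦ u⁻¹ t₂₂` is an automorphism for every unit `u`. Moving a generator past
`x = -q t₁₂ t₂₁` with the `q`-commutation relations rescales it exactly as `σ` does, and since the
generators generate, `r x = x σ(r)` for all `r`. Iterating gives `r xⁿ = xⁿ σⁿ(r)`, and the
surjectivity of `σⁿ` gives the other half of the Ore condition.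
-/

theorem SemiconjBy.pow_left_iterate {M : Type*} [Monoid M] {x : M} {σ : M → M}
    (h : ∀ r, SemiconjBy x (σ r) r) (n : ℕ) (r : M) : SemiconjBy (x ^ n) (σ^[n] r) r := by
  induction n generalizing r with
  | zero => rw [pow_zero, Function.iterate_zero_apply]; exact SemiconjBy.one_left r
  | succ n ih =>
    rw [pow_succ', Function.iterate_succ_apply]
    exact (h r).mul_left (ih (σ r))

theorem SemiconjBy.exists_ore_pow {M : Type*} [Monoid M] {x : M} {σ : M → M}
    (hσ : Function.Surjective σ) (h : ∀ r, SemiconjBy x (σ r) r) (r : M) (n : ℕ) :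
    ∃ r' r'' : M, r * x ^ n = x ^ n * r' ∧ x ^ n * r = r'' * x ^ n := by
  obtain ⟨r₀, rfl⟩ := hσ.iterate n r
  exact ⟨σ^[n] (σ^[n] r₀), r₀, (SemiconjBy.pow_left_iterate h n _).eq.symm,
    (SemiconjBy.pow_left_iterate h n r₀).eq⟩

theorem SemiconjBy.of_adjoin_eq_top {R A : Type*} [CommSemiring R] [Semiring A] [Algebra R A]
    {s : Set A} (hs : Algebra.adjoin R s = ⊤) (x : A) (σ : A →ₐ[R] A)
    (h : ∀ g ∈ s, SemiconjBy x (σ g) g) (r : A) : SemiconjBy x (σ r) r := by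
  have hr : r ∈ Algebra.adjoin R s := hs ▸ Algebra.mem_top
  induction hr using Algebra.adjoin_induction with
  | mem g hg => exact h g hg
  | algebraMap c => rw [AlgHom.commutes]; exact (Algebra.commutes c x).symm
  | add r₁ r₂ _ _ h₁ h₂ => rw [map_add]; exact h₁.add_right h₂
  | mul r₁ r₂ _ _ h₁ h₂ => rw [map_mul]; exact h₁.mul_right h₂

namespace QuantumSL2

variable (q : ℝ)

theorem t11_mul_t12 : t11 q * t12 q = (q : ℂ) • (t12 q * t11 q) := by
  simpa only [t11, t12, map_mul, map_smul] using
    RingQuot.mkAlgHom_rel ℂ (SLRel.r1 (q := q))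

theorem t11_mul_t21 : t11 q * t21 q = (q : ℂ) • (t21 q * t11 q) := by
  simpa only [t11, t21, map_mul, map_smul] using
    RingQuot.mkAlgHom_rel ℂ (SLRel.r2 (q := q))

theorem t12_mul_t22 : t12 q * t22 q = (q : ℂ) • (t22 q * t12 q) := by
  simpa only [t12, t22, map_mul, map_smul] using
    RingQuot.mkAlgHom_rel ℂ (SLRel.r3 (q := q))

theorem t21_mul_t22 : t21 q * t22 q = (q : ℂ) • (t22 q * t21 q) := by
  simpa only [t21, t22, map_mul, map_smul] using
    RingQuot.mkAlgHom_rel ℂ (SLRel.r4 (q := q))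

theorem t12_mul_t21 : t12 q * t21 q = t21 q * t12 q := by
  simpa only [t12, t21, map_mul] using
    RingQuot.mkAlgHom_rel ℂ (SLRel.r5 (q := q))

theorem t11_mul_t22_sub_t22_mul_t11 :
    t11 q * t22 q - t22 q * t11 q = ((q : ℂ) - (q : ℂ)⁻¹) • (t12 q * t21 q) := by
  simpa only [t11, t12, t21, t22, map_sub, map_mul, map_smul] using
    RingQuot.mkAlgHom_rel ℂ (SLRel.r6 (q := q))

theorem t11_mul_t22_sub_smul_t12_mul_t21 : t11 q * t22 q - (q : ℂ) • (t12 q * t21 q) = 1 := by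
  simpa only [t11, t12, t21, t22, map_sub, map_mul, map_smul, map_one] using
    RingQuot.mkAlgHom_rel ℂ (SLRel.r7 (q := q))

theorem adjoin_generators_eq_top :
    Algebra.adjoin ℂ {t11 q, t12 q, t21 q, t22 q} = (⊤ : Subalgebra ℂ (SL2q q)) := by
  have hrange : RingQuot.mkAlgHom ℂ (SLRel q) '' Set.range (FreeAlgebra.ι ℂ) =
      {t11 q, t12 q, t21 q, t22 q} := by
    ext x
    simp [← Set.range_comp, Fin.exists_fin_succ, t11, t12, t21, t22, a, b, c, d, eq_comm]
  rw [← hrange, ← AlgHom.map_adjoin, FreeAlgebra.adjoin_range_ι, Algebra.map_top,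
    AlgHom.range_eq_top]
  exact RingQuot.mkAlgHom_surjective ℂ (SLRel q)

theorem t11_mul_t12_mul_t21 :
    t11 q * (t12 q * t21 q) = ((q : ℂ) ^ 2) • (t12 q * t21 q * t11 q) := by
  rw [← mul_assoc, t11_mul_t12, smul_mul_assoc, mul_assoc, t11_mul_t21, mul_smul_comm, smul_smul,
    ← mul_assoc, sq]

def scaleGenerators (u : ℂˣ) : Fin 4 → SL2q q :=
  ![(u : ℂ) • t11 q, t12 q, t21 q, ((u⁻¹ : ℂˣ) : ℂ) • t22 q]

theorem lift_scaleGenerators_rel (u : ℂˣ) ⦃x y : F4⦄ (h : SLRel q x y) :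
    FreeAlgebra.lift ℂ (scaleGenerators q u) x = FreeAlgebra.lift ℂ (scaleGenerators q u) y := by
  cases h <;>
    simp only [a, b, c, d, scaleGenerators, map_mul, map_smul, map_sub, map_one,
      FreeAlgebra.lift_ι_apply, Matrix.cons_val, smul_mul_assoc, mul_smul_comm, smul_smul,
      Units.mul_inv, Units.inv_mul, one_smul]
  · rw [t11_mul_t12, smul_smul, mul_comm]
  · rw [t11_mul_t21, smul_smul, mul_comm]
  · rw [t12_mul_t22, smul_smul, mul_comm]
  · rw [t21_mul_t22, smul_smul, mul_comm]
  · exact t12_mul_t21 q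
  · exact t11_mul_t22_sub_t22_mul_t11 q
  · exact t11_mul_t22_sub_smul_t12_mul_t21 q

def scaleHom (u : ℂˣ) : SL2q q →ₐ[ℂ] SL2q q :=
  RingQuot.liftAlgHom ℂ ⟨FreeAlgebra.lift ℂ (scaleGenerators q u), lift_scaleGenerators_rel q u⟩

variable {q}

theorem t22_mul_t12_mul_t21 (hq : (q : ℂ) ≠ 0) :
    t22 q * (t12 q * t21 q) = ((q : ℂ) ^ 2)⁻¹ • (t12 q * t21 q * t22 q) := by
  have h12 : t22 q * t12 q = (q : ℂ)⁻¹ • (t12 q * t22 q) := by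
    rw [t12_mul_t22, smul_smul, inv_mul_cancel₀ hq, one_smul]
  have h21 : t22 q * t21 q = (q : ℂ)⁻¹ • (t21 q * t22 q) := by
    rw [t21_mul_t22, smul_smul, inv_mul_cancel₀ hq, one_smul]
  rw [← mul_assoc, h12, smul_mul_assoc, mul_assoc, h21, mul_smul_comm, smul_smul,
    ← mul_assoc, ← mul_inv, ← sq]

theorem algHom_ext {A : Type*} [Semiring A] [Algebra ℂ A] {f g : SL2q q →ₐ[ℂ] A}
    (h11 : f (t11 q) = g (t11 q)) (h12 : f (t12 q) = g (t12 q))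
    (h21 : f (t21 q) = g (t21 q)) (h22 : f (t22 q) = g (t22 q)) : f = g := by
  refine AlgHom.ext_of_adjoin_eq_top (adjoin_generators_eq_top q) ?_
  rintro x (rfl | rfl | rfl | rfl) <;> assumption

theorem semiconjBy_t12_mul_t21 (hq : (q : ℂ) ≠ 0) (σ : SL2q q →ₐ[ℂ] SL2q q)
    (h11 : σ (t11 q) = ((q : ℂ) ^ 2) • t11 q) (h12 : σ (t12 q) = t12 q)
    (h21 : σ (t21 q) = t21 q) (h22 : σ (t22 q) = ((q : ℂ) ^ 2)⁻¹ • t22 q) (r : SL2q q) :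
    SemiconjBy (t12 q * t21 q) (σ r) r := by
  refine SemiconjBy.of_adjoin_eq_top (adjoin_generators_eq_top q) _ σ ?_ r
  rintro g (rfl | rfl | rfl | rfl)
  · rw [SemiconjBy, h11, mul_smul_comm, t11_mul_t12_mul_t21]
  · rw [SemiconjBy, h12, mul_assoc, ← t12_mul_t21, ← mul_assoc]
  · rw [SemiconjBy, h21, t12_mul_t21, mul_assoc, ← t12_mul_t21, ← mul_assoc]
  · rw [SemiconjBy, h22, mul_smul_comm, t22_mul_t12_mul_t21 hq]

@[simp] theorem scaleHom_t11 (u : ℂˣ) : scaleHom q u (t11 q) = (u : ℂ) • t11 q := by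
  simp [scaleHom, t11, a, scaleGenerators]

@[simp] theorem scaleHom_t12 (u : ℂˣ) : scaleHom q u (t12 q) = t12 q := by
  simp [scaleHom, t12, b, scaleGenerators]

@[simp] theorem scaleHom_t21 (u : ℂˣ) : scaleHom q u (t21 q) = t21 q := by
  simp [scaleHom, t21, c, scaleGenerators]

@[simp] theorem scaleHom_t22 (u : ℂˣ) : scaleHom q u (t22 q) = ((u⁻¹ : ℂˣ) : ℂ) • t22 q := by
  simp [scaleHom, t22, d, scaleGenerators]

theorem scaleHom_one : scaleHom q 1 = AlgHom.id ℂ (SL2q q) :=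
  algHom_ext (by simp) (by simp) (by simp) (by simp)

theorem scaleHom_comp_scaleHom (u v : ℂˣ) :
    (scaleHom q u).comp (scaleHom q v) = scaleHom q (u * v) :=
  algHom_ext (by simp [smul_smul, mul_comm]) (by simp) (by simp) (by simp [smul_smul, mul_comm])

variable (q)

def scale (u : ℂˣ) : SL2q q ≃ₐ[ℂ] SL2q q :=
  AlgEquiv.ofAlgHom (scaleHom q u) (scaleHom q u⁻¹)
    (by rw [scaleHom_comp_scaleHom, mul_inv_cancel, scaleHom_one])
    (by rw [scaleHom_comp_scaleHom, inv_mul_cancel, scaleHom_one])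

end QuantumSL2

theorem sl2q_sigma_ore_general (q : ℝ) (hq0 : 0 < q) :
    (∃! σ : SL2q q ≃ₐ[ℂ] SL2q q,
      σ (t11 q) = ((q : ℂ) ^ 2) • t11 q ∧
      σ (t12 q) = t12 q ∧
      σ (t21 q) = t21 q ∧
      σ (t22 q) = (((q : ℂ) ^ 2)⁻¹) • t22 q) ∧
    (∀ σ : SL2q q ≃ₐ[ℂ] SL2q q,
      σ (t11 q) = ((q : ℂ) ^ 2) • t11 q →
      σ (t12 q) = t12 q →
      σ (t21 q) = t21 q →
      σ (t22 q) = (((q : ℂ) ^ 2)⁻¹) • t22 q →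
      ∀ r : SL2q q, r * ((-(q : ℂ)) • (t12 q * t21 q)) =
        ((-(q : ℂ)) • (t12 q * t21 q)) * σ r) ∧
    (∀ (r : SL2q q) (n : ℕ), ∃ r' r'' : SL2q q,
      r * ((-(q : ℂ)) • (t12 q * t21 q)) ^ n =
        ((-(q : ℂ)) • (t12 q * t21 q)) ^ n * r' ∧
      ((-(q : ℂ)) • (t12 q * t21 q)) ^ n * r =
        r'' * ((-(q : ℂ)) • (t12 q * t21 q)) ^ n) := by
  have hq : (q : ℂ) ≠ 0 := by exact_mod_cast hq0.ne'
  set σ := scale q (Units.mk0 ((q : ℂ) ^ 2) (pow_ne_zero 2 hq))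
  obtain ⟨h11, h12, h21, h22⟩ : σ (t11 q) = ((q : ℂ) ^ 2) • t11 q ∧ σ (t12 q) = t12 q ∧
      σ (t21 q) = t21 q ∧ σ (t22 q) = ((q : ℂ) ^ 2)⁻¹ • t22 q := by
    simp [σ, scale]
  have hσ (r : SL2q q) : SemiconjBy ((-(q : ℂ)) • (t12 q * t21 q)) (σ r) r :=
    (semiconjBy_t12_mul_t21 hq σ h11 h12 h21 h22 r).smul_left _
  refine ⟨⟨σ, ⟨h11, h12, h21, h22⟩, ?_⟩, ?_, SemiconjBy.exists_ore_pow σ.surjective hσ⟩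
  · rintro τ ⟨k11, k12, k21, k22⟩
    exact AlgEquiv.coe_toAlgHom_injective <|
      algHom_ext (k11.trans h11.symm) (k12.trans h12.symm) (k21.trans h21.symm) (k22.trans h22.symm)
  · intro τ k11 k12 k21 k22 r
    exact ((semiconjBy_t12_mul_t21 hq τ k11 k12 k21 k22 r).smul_left _).eq.symm

/-- There is a unique algebra automorphism `σ` of `ℂ[SL₂]_q` with
`σ(t₁₁) = q² t₁₁`, `σ(t₁₂) = t₁₂`, `σ(t₂₁) = t₂₁`, `σ(t₂₂) = q⁻² t₂₂`; it satisfies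
`r x = x σ(r)` for all `r`, where `x = −q t₁₂ t₂₁`; in particular the powers of `x`
satisfy the two-sided Ore condition. -/
theorem sl2q_sigma_ore (q : ℝ) (hq0 : 0 < q) (hq1 : q < 1) :
    (∃! σ : SL2q q ≃ₐ[ℂ] SL2q q,
      σ (t11 q) = ((q : ℂ) ^ 2) • t11 q ∧
      σ (t12 q) = t12 q ∧
      σ (t21 q) = t21 q ∧
      σ (t22 q) = (((q : ℂ) ^ 2)⁻¹) • t22 q) ∧
    (∀ σ : SL2q q ≃ₐ[ℂ] SL2q q,
      σ (t11 q) = ((q : ℂ) ^ 2) • t11 q →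
      σ (t12 q) = t12 q →
      σ (t21 q) = t21 q →
      σ (t22 q) = (((q : ℂ) ^ 2)⁻¹) • t22 q →
      ∀ r : SL2q q, r * ((-(q : ℂ)) • (t12 q * t21 q)) =
        ((-(q : ℂ)) • (t12 q * t21 q)) * σ r) ∧
    (∀ (r : SL2q q) (n : ℕ), ∃ r' r'' : SL2q q,
      r * ((-(q : ℂ)) • (t12 q * t21 q)) ^ n =
        ((-(q : ℂ)) • (t12 q * t21 q)) ^ n * r' ∧
      ((-(q : ℂ)) • (t12 q * t21 q)) ^ n * r =
        r'' * ((-(q : ℂ)) • (t12 q * t21 q)) ^ n) :=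
  sl2q_sigma_ore_general q hq0
end
end

section
/- Let R be a unital ℂ-algebra and φ : ℂ[SL₂]_q → R a unital algebra homomorphism such that φ(t₁₂ t₂₁) is invertible in R. Then φ(t₁₂) and φ(t₂₁) are invertible in R, and the elements Z = φ(t₁₂)^{−1} φ(t₁₁) and W = φ(t₂₂) φ(t₂₁)^{−1} satisfy the identity Z W − q^{−2} W Z = (q − q^{−1})·1. (This is the key identity showing that z ↦ t₁₂^{−1} t₁₁ defines an embedding of the quantum disc algebra into the localization ℂ[w₀SU₁,₁]_{q,x}.) -/
noncomputable section

open QuantumSL2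

/-! With `z = b⁻¹ a` and `w = d c⁻¹`, the relation `a d = 1 + q b c` gives `z w = b⁻¹ c⁻¹ + q`.
Moving `d` to the right through `c⁻¹` and `b⁻¹` costs a factor `q` each, and `d a = 1 + q⁻¹ b c`
then gives `w z = q² c⁻¹ b⁻¹ + q`. Since `b` and `c` commute, so do their inverses, and the
`b⁻¹ c⁻¹` terms cancel in `z w - q⁻² w z`. Invertibility of `b` and `c` comes from that of the
commuting product `b c`. -/

namespace QuantumSL2

section RingInverse

open scoped Ring

variable {k R : Type*} [Field k] [Ring R] [Algebra k R] {q : k}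

theorem mul_inverse_eq_smul_inverse_mul {b d : R} (hb : IsUnit b) (h : b * d = q • (d * b)) :
    d * b⁻¹ʳ = q • (b⁻¹ʳ * d) := by
  obtain ⟨u, rfl⟩ := hb
  rw [Ring.inverse_unit]
  calc d * ↑u⁻¹ = ↑u⁻¹ * (↑u * d) * ↑u⁻¹ := by simp [← mul_assoc]
    _ = q • (↑u⁻¹ * d) := by rw [h, mul_smul_comm, smul_mul_assoc]; simp [mul_assoc]

theorem inverse_mul_mul_mul_inverse {a b c d : R} (hb : IsUnit b) (hc : IsUnit c)
    (had : a * d = 1 + q • (b * c)) :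
    (b⁻¹ʳ * a) * (d * c⁻¹ʳ) = b⁻¹ʳ * c⁻¹ʳ + q • 1 := by
  calc (b⁻¹ʳ * a) * (d * c⁻¹ʳ) = b⁻¹ʳ * (a * d) * c⁻¹ʳ := by simp only [mul_assoc]
    _ = b⁻¹ʳ * c⁻¹ʳ + q • ((b⁻¹ʳ * b) * (c * c⁻¹ʳ)) := by
      rw [had]; simp only [mul_add, add_mul, mul_one, mul_smul_comm, smul_mul_assoc, mul_assoc]
    _ = b⁻¹ʳ * c⁻¹ʳ + q • 1 := by
      rw [Ring.inverse_mul_cancel b hb, Ring.mul_inverse_cancel c hc, one_mul]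

theorem mul_inverse_mul_inverse_mul {a b c d : R} (hq : q ≠ 0) (hb : IsUnit b) (hc : IsUnit c)
    (hbd : b * d = q • (d * b)) (hcd : c * d = q • (d * c)) (hda : d * a = 1 + q⁻¹ • (b * c)) :
    (d * c⁻¹ʳ) * (b⁻¹ʳ * a) = q ^ 2 • (c⁻¹ʳ * b⁻¹ʳ) + q • 1 := by
  calc (d * c⁻¹ʳ) * (b⁻¹ʳ * a) = q • (c⁻¹ʳ * ((d * b⁻¹ʳ) * a)) := by
        rw [mul_inverse_eq_smul_inverse_mul hc hcd]; simp only [smul_mul_assoc, mul_assoc]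
    _ = q ^ 2 • (c⁻¹ʳ * b⁻¹ʳ * (d * a)) := by
        rw [mul_inverse_eq_smul_inverse_mul hb hbd, smul_mul_assoc, mul_smul_comm, smul_smul,
          sq]
        simp only [mul_assoc]
    _ = q ^ 2 • (c⁻¹ʳ * b⁻¹ʳ) + (q ^ 2 * q⁻¹) • (c⁻¹ʳ * (b⁻¹ʳ * b) * c) := by
        rw [hda]; simp only [mul_add, mul_one, smul_add, mul_smul_comm, smul_smul, mul_assoc]
    _ = q ^ 2 • (c⁻¹ʳ * b⁻¹ʳ) + q • 1 := by
      rw [Ring.inverse_mul_cancel b hb, mul_one, Ring.inverse_mul_cancel c hc, sq,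
        mul_inv_cancel_right₀ hq]

theorem disc_relation_of_sl2_relations {a b c d : R} (hq : q ≠ 0) (hb : IsUnit b) (hc : IsUnit c)
    (hbc : Commute b c) (hbd : b * d = q • (d * b)) (hcd : c * d = q • (d * c))
    (had : a * d = 1 + q • (b * c)) (hda : d * a = 1 + q⁻¹ • (b * c)) :
    (b⁻¹ʳ * a) * (d * c⁻¹ʳ) - (q ^ 2)⁻¹ • ((d * c⁻¹ʳ) * (b⁻¹ʳ * a)) = (q - q⁻¹) • 1 := by
  rw [inverse_mul_mul_mul_inverse hb hc had, mul_inverse_mul_inverse_mul hq hb hc hbd hcd hda,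
    hbc.ringInverse_ringInverse.eq]
  match_scalars <;> field_simp
  ring

end RingInverse

variable (q : ℝ)

theorem t12_commute_t21 : Commute (t12 q) (t21 q) := by
  have h := RingQuot.mkAlgHom_rel ℂ (SLRel.r5 (q := q))
  rwa [map_mul, map_mul] at h

theorem t11_mul_t22 : t11 q * t22 q = 1 + (q : ℂ) • (t12 q * t21 q) := by
  rw [← sub_eq_iff_eq_add]
  simpa only [t11, t12, t21, t22, map_sub, map_mul, map_smul, map_one]
    using RingQuot.mkAlgHom_rel ℂ SLRel.r7

theorem t22_mul_t11 : t22 q * t11 q = 1 + (q : ℂ)⁻¹ • (t12 q * t21 q) := by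
  have hcommutator : t11 q * t22 q - t22 q * t11 q = ((q : ℂ) - (q : ℂ)⁻¹) • (t12 q * t21 q) := by
    simpa only [t11, t12, t21, t22, map_sub, map_mul, map_smul]
      using RingQuot.mkAlgHom_rel ℂ SLRel.r6
  calc t22 q * t11 q = t11 q * t22 q - (t11 q * t22 q - t22 q * t11 q) :=
        (sub_sub_cancel _ _).symm
    _ = 1 + (q : ℂ)⁻¹ • (t12 q * t21 q) := by rw [hcommutator, t11_mul_t22]; module

end QuantumSL2

theorem sl2q_localized_disc_relation_general (q : ℝ) (hq0 : 0 < q)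
    {R : Type*} [Ring R] [Algebra ℂ R]
    (φ : SL2q q →ₐ[ℂ] R) (hx : IsUnit (φ (t12 q * t21 q))) :
    IsUnit (φ (t12 q)) ∧ IsUnit (φ (t21 q)) ∧
    (Ring.inverse (φ (t12 q)) * φ (t11 q)) * (φ (t22 q) * Ring.inverse (φ (t21 q))) -
      (((q : ℂ) ^ 2)⁻¹) •
        ((φ (t22 q) * Ring.inverse (φ (t21 q))) * (Ring.inverse (φ (t12 q)) * φ (t11 q))) =
      ((q : ℂ) - (q : ℂ)⁻¹) • (1 : R) := by
  have hcomm : Commute (φ (t12 q)) (φ (t21 q)) := (t12_commute_t21 q).map φ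
  obtain ⟨hb, hc⟩ := hcomm.isUnit_mul_iff.mp (map_mul φ _ _ ▸ hx)
  refine ⟨hb, hc,
    disc_relation_of_sl2_relations (by exact_mod_cast hq0.ne') hb hc hcomm ?_ ?_ ?_ ?_⟩
  · simpa only [map_mul, map_smul] using congrArg φ (t12_mul_t22 q)
  · simpa only [map_mul, map_smul] using congrArg φ (t21_mul_t22 q)
  · simpa only [map_add, map_one, map_mul, map_smul] using congrArg φ (t11_mul_t22 q)
  · simpa only [map_add, map_one, map_mul, map_smul] using congrArg φ (t22_mul_t11 q)

/-- If `φ : ℂ[SL₂]_q → R` is a unital algebra homomorphism with `φ(t₁₂ t₂₁)`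
invertible, then `φ(t₁₂)` and `φ(t₂₁)` are invertible and
`Z = φ(t₁₂)⁻¹ φ(t₁₁)`, `W = φ(t₂₂) φ(t₂₁)⁻¹` satisfy
`Z W − q⁻² W Z = (q − q⁻¹)·1`. -/
theorem sl2q_localized_disc_relation (q : ℝ) (hq0 : 0 < q) (hq1 : q < 1)
    {R : Type*} [Ring R] [Algebra ℂ R]
    (φ : SL2q q →ₐ[ℂ] R) (hx : IsUnit (φ (t12 q * t21 q))) :
    IsUnit (φ (t12 q)) ∧ IsUnit (φ (t21 q)) ∧
    (Ring.inverse (φ (t12 q)) * φ (t11 q)) * (φ (t22 q) * Ring.inverse (φ (t21 q))) -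
      (((q : ℂ) ^ 2)⁻¹) •
        ((φ (t22 q) * Ring.inverse (φ (t21 q))) * (Ring.inverse (φ (t12 q)) * φ (t11 q))) =
      ((q : ℂ) - (q : ℂ)⁻¹) • (1 : R) :=
  sl2q_localized_disc_relation_general q hq0 φ hx
end
end

section
/- The linear endomorphisms π₊(t₁₁), π₊(t₁₂), π₊(t₂₁), π₊(t₂₂) of V satisfy all seven defining relations of ℂ[SL₂]_q, namely: π₊(t₁₁)π₊(t₁₂) = q π₊(t₁₂)π₊(t₁₁), π₊(t₁₁)π₊(t₂₁) = q π₊(t₂₁)π₊(t₁₁), π₊(t₁₂)π₊(t₂₂) = q π₊(t₂₂)π₊(t₁₂), π₊(t₂₁)π₊(t₂₂) = q π₊(t₂₂)π₊(t₂₁), π₊(t₁₂)π₊(t₂₁) = π₊(t₂₁)π₊(t₁₂), π₊(t₁₁)π₊(t₂₂) − π₊(t₂₂)π₊(t₁₁) = (q − q^{−1}) π₊(t₁₂)π₊(t₂₁), and π₊(t₁₁)π₊(t₂₂) − q π₊(t₁₂)π₊(t₂₁) = id_V. Consequently they induce a unital algebra homomorphism π₊ : ℂ[SL₂]_q → End(V).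 -/
/-!
In the basis `eV j`, `A` and `D` are weighted shifts raising and lowering the index, with weights
`±sⱼ` where `sⱼ = √(q^{-2(j+1)} - 1)`, while `B` and `C` are diagonal with weights geometric of
ratio `q⁻¹` in `j`. Moving a shift past such a diagonal operator rescales it by `q`, which gives the
four `q`-commutation relations, and diagonal operators commute. The products `AD` and `DA` are
diagonal too, with weights `-sⱼ₋₁²` (and `0` at `j = 0`) and `-sⱼ²`, so the last two relations
reduce to `sⱼ² = q^{-2(j+1)} - 1`, true because `q ≤ 1` makes the radicand nonnegative. The
relations then let `FreeAlgebra.lift` descend to the quotient `ℂ[SL₂]_q`.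
-/

noncomputable section

open QuantumSL2

/-- The standard basis vectors of the space `V = ℕ →₀ ℂ` of finitely supported
functions. -/
def eV (j : ℕ) : ℕ →₀ ℂ := Finsupp.single j 1

namespace QuantumSL2

structure SatisfiesSLRel (q : ℝ) {R : Type*} [Ring R] [Algebra ℂ R] (A B C D : R) : Prop where
  r1 : A * B = (q : ℂ) • (B * A)
  r2 : A * C = (q : ℂ) • (C * A)
  r3 : B * D = (q : ℂ) • (D * B)
  r4 : C * D = (q : ℂ) • (D * C)
  r5 : B * C = C * B
  r6 : A * D - D * A = ((q : ℂ) - (q : ℂ)⁻¹) • (B * C)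
  r7 : A * D - (q : ℂ) • (B * C) = 1

theorem SatisfiesSLRel.exists_algHom {q : ℝ} {R : Type*} [Ring R] [Algebra ℂ R] {A B C D : R}
    (h : SatisfiesSLRel q A B C D) :
    ∃ π : SL2q q →ₐ[ℂ] R, π (t11 q) = A ∧ π (t12 q) = B ∧ π (t21 q) = C ∧ π (t22 q) = D := by
  let φ : F4 →ₐ[ℂ] R := FreeAlgebra.lift ℂ ![A, B, C, D]
  have hφ : ∀ ⦃x y : F4⦄, SLRel q x y → φ x = φ y := by
    intro x y hxy
    cases hxy <;>
      simp only [φ, a, b, c, d, map_mul, map_sub, map_smul, map_one, FreeAlgebra.lift_ι_apply,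
        Matrix.cons_val_zero, Matrix.cons_val_one, Matrix.cons_val_two, Matrix.cons_val_three]
    exacts [h.r1, h.r2, h.r3, h.r4, h.r5, h.r6, h.r7]
  exact ⟨RingQuot.liftAlgHom ℂ ⟨φ, hφ⟩, by simp [φ, t11, t12, t21, t22, a, b, c, d]⟩

end QuantumSL2

theorem ext_eV {f g : Module.End ℂ (ℕ →₀ ℂ)} (h : ∀ j, f (eV j) = g (eV j)) : f = g :=
  Finsupp.basisSingleOne.ext h

section WeightedShifts

variable {A B C D : Module.End ℂ (ℕ →₀ ℂ)} {α β γ δ : ℕ → ℂ}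

theorem diag_mul_diag_eV (hB : ∀ j, B (eV j) = β j • eV j) (hC : ∀ j, C (eV j) = γ j • eV j)
    (j : ℕ) : (B * C) (eV j) = (γ j * β j) • eV j := by
  simp only [Module.End.mul_apply, hB, hC, map_smul, smul_smul]

theorem diag_mul_diag_comm (hB : ∀ j, B (eV j) = β j • eV j) (hC : ∀ j, C (eV j) = γ j • eV j) :
    B * C = C * B :=
  ext_eV fun j => by rw [diag_mul_diag_eV hB hC, diag_mul_diag_eV hC hB, mul_comm]

theorem upShift_mul_diag (s : ℂ) (hA : ∀ j, A (eV j) = α j • eV (j + 1))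
    (hB : ∀ j, B (eV j) = β j • eV j) (hβ : ∀ j, β j = s * β (j + 1)) :
    A * B = s • (B * A) :=
  ext_eV fun j => by
    simp only [Module.End.mul_apply, LinearMap.smul_apply, hA, hB, map_smul, smul_smul, hβ j]
    ring_nf

theorem diag_mul_downShift (s : ℂ) (hB : ∀ j, B (eV j) = β j • eV j) (hD0 : D (eV 0) = 0)
    (hD : ∀ j, D (eV (j + 1)) = δ j • eV j) (hβ : ∀ j, β j = s * β (j + 1)) :
    B * D = s • (D * B) := by
  refine ext_eV ?_
  rintro (_ | j)
  · simp [hB, hD0]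
  · simp only [Module.End.mul_apply, LinearMap.smul_apply, hB, hD, map_smul, smul_smul, hβ j]
    ring_nf

theorem upShift_mul_downShift_eV_succ (hA : ∀ j, A (eV j) = α j • eV (j + 1))
    (hD : ∀ j, D (eV (j + 1)) = δ j • eV j) (j : ℕ) :
    (A * D) (eV (j + 1)) = (δ j * α j) • eV (j + 1) := by
  simp only [Module.End.mul_apply, hA, hD, map_smul, smul_smul]

theorem downShift_mul_upShift_eV (hA : ∀ j, A (eV j) = α j • eV (j + 1))
    (hD : ∀ j, D (eV (j + 1)) = δ j • eV j) (j : ℕ) :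
    (D * A) (eV j) = (α j * δ j) • eV j := by
  simp only [Module.End.mul_apply, hA, hD, map_smul, smul_smul]

end WeightedShifts

theorem ofReal_sqrt_inv_pow_sub_one_mul_self {q : ℝ} (hq0 : 0 < q) (hq1 : q ≤ 1) (n : ℕ) :
    (√((q ^ n)⁻¹ - 1) : ℂ) * (√((q ^ n)⁻¹ - 1) : ℂ) = ((q : ℂ) ^ n)⁻¹ - 1 := by
  have hnonneg : 0 ≤ (q ^ n)⁻¹ - 1 :=
    sub_nonneg.mpr ((one_le_inv₀ (pow_pos hq0 n)).mpr (pow_le_one₀ hq0.le hq1))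
  rw [← Complex.ofReal_mul, Real.mul_self_sqrt hnonneg]
  push_cast
  rfl

structure IsPiPlus (q : ℝ) (A B C D : Module.End ℂ (ℕ →₀ ℂ)) : Prop where
  t11_eV : ∀ j : ℕ, A (eV j) = (Real.sqrt ((q ^ (2 * (j + 1)))⁻¹ - 1) : ℂ) • eV (j + 1)
  t12_eV : ∀ j : ℕ, B (eV j) = (((q : ℂ) ^ j)⁻¹) • eV j
  t21_eV : ∀ j : ℕ, C (eV j) = (-((q : ℂ) ^ (j + 1))⁻¹) • eV j
  t22_eV_zero : D (eV 0) = 0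
  t22_eV_succ : ∀ j : ℕ, D (eV (j + 1)) = (-(Real.sqrt ((q ^ (2 * (j + 1)))⁻¹ - 1) : ℂ)) • eV j

namespace IsPiPlus

variable {q : ℝ} {A B C D : Module.End ℂ (ℕ →₀ ℂ)}

theorem commutator_t11_t22 (h : IsPiPlus q A B C D) (hq0 : 0 < q) (hq1 : q < 1) :
    A * D - D * A = ((q : ℂ) - (q : ℂ)⁻¹) • (B * C) := by
  have hq : (q : ℂ) ≠ 0 := by exact_mod_cast hq0.ne'
  have hsq := ofReal_sqrt_inv_pow_sub_one_mul_self hq0 hq1.le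
  refine ext_eV ?_
  rintro (_ | j)
  · rw [LinearMap.sub_apply, Module.End.mul_apply, h.t22_eV_zero, map_zero,
      downShift_mul_upShift_eV h.t11_eV h.t22_eV_succ, LinearMap.smul_apply,
      diag_mul_diag_eV h.t12_eV h.t21_eV, smul_smul]
    match_scalars
    simp only [mul_neg, neg_mul, hsq]
    field_simp
    ring
  · rw [LinearMap.sub_apply, upShift_mul_downShift_eV_succ h.t11_eV h.t22_eV_succ,
      downShift_mul_upShift_eV h.t11_eV h.t22_eV_succ, LinearMap.smul_apply,
      diag_mul_diag_eV h.t12_eV h.t21_eV, smul_smul, ← sub_smul]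
    match_scalars
    simp only [mul_neg, neg_mul, hsq]
    field_simp
    ring

theorem qdet_eq_one (h : IsPiPlus q A B C D) (hq0 : 0 < q) (hq1 : q < 1) :
    A * D - (q : ℂ) • (B * C) = 1 := by
  have hq : (q : ℂ) ≠ 0 := by exact_mod_cast hq0.ne'
  have hsq := ofReal_sqrt_inv_pow_sub_one_mul_self hq0 hq1.le
  refine ext_eV ?_
  rintro (_ | j)
  · rw [LinearMap.sub_apply, Module.End.mul_apply, h.t22_eV_zero, map_zero, LinearMap.smul_apply,
      diag_mul_diag_eV h.t12_eV h.t21_eV, smul_smul, Module.End.one_apply]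
    match_scalars
    field_simp
    ring
  · rw [LinearMap.sub_apply, upShift_mul_downShift_eV_succ h.t11_eV h.t22_eV_succ,
      LinearMap.smul_apply, diag_mul_diag_eV h.t12_eV h.t21_eV, smul_smul, Module.End.one_apply]
    match_scalars
    simp only [neg_mul, hsq]
    field_simp
    ring

theorem satisfiesSLRel (h : IsPiPlus q A B C D) (hq0 : 0 < q) (hq1 : q < 1) :
    SatisfiesSLRel q A B C D := by
  have hq : (q : ℂ) ≠ 0 := by exact_mod_cast hq0.ne'
  have hB : ∀ j : ℕ, ((q : ℂ) ^ j)⁻¹ = q * ((q : ℂ) ^ (j + 1))⁻¹ := fun j => by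
    rw [pow_succ, mul_inv, mul_left_comm, mul_inv_cancel₀ hq, mul_one]
  have hC : ∀ j : ℕ, -((q : ℂ) ^ (j + 1))⁻¹ = q * -((q : ℂ) ^ (j + 1 + 1))⁻¹ := fun j => by
    rw [hB (j + 1), mul_neg]
  exact
    { r1 := upShift_mul_diag _ h.t11_eV h.t12_eV hB
      r2 := upShift_mul_diag _ h.t11_eV h.t21_eV hC
      r3 := diag_mul_downShift _ h.t12_eV h.t22_eV_zero h.t22_eV_succ hB
      r4 := diag_mul_downShift _ h.t21_eV h.t22_eV_zero h.t22_eV_succ hC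
      r5 := diag_mul_diag_comm h.t12_eV h.t21_eV
      r6 := h.commutator_t11_t22 hq0 hq1
      r7 := h.qdet_eq_one hq0 hq1 }

end IsPiPlus

/-- The operators of the representation `π₊` satisfy the seven defining relations of
`ℂ[SL₂]_q`, hence induce a unital algebra homomorphism `π₊ : ℂ[SL₂]_q → End(V)`. -/
theorem sl2q_piPlus_representation (q : ℝ) (hq0 : 0 < q) (hq1 : q < 1)
    (A B C D : Module.End ℂ (ℕ →₀ ℂ))
    (hA : ∀ j : ℕ, A (eV j) = (Real.sqrt ((q ^ (2 * (j + 1)))⁻¹ - 1) : ℂ) • eV (j + 1))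
    (hB : ∀ j : ℕ, B (eV j) = (((q : ℂ) ^ j)⁻¹) • eV j)
    (hC : ∀ j : ℕ, C (eV j) = (-((q : ℂ) ^ (j + 1))⁻¹) • eV j)
    (hD0 : D (eV 0) = 0)
    (hD : ∀ j : ℕ, D (eV (j + 1)) = (-(Real.sqrt ((q ^ (2 * (j + 1)))⁻¹ - 1) : ℂ)) • eV j) :
    A * B = (q : ℂ) • (B * A) ∧
    A * C = (q : ℂ) • (C * A) ∧
    B * D = (q : ℂ) • (D * B) ∧
    C * D = (q : ℂ) • (D * C) ∧
    B * C = C * B ∧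
    A * D - D * A = ((q : ℂ) - (q : ℂ)⁻¹) • (B * C) ∧
    A * D - (q : ℂ) • (B * C) = 1 ∧
    ∃ π : SL2q q →ₐ[ℂ] Module.End ℂ (ℕ →₀ ℂ),
      π (t11 q) = A ∧ π (t12 q) = B ∧ π (t21 q) = C ∧ π (t22 q) = D := by
  have h : SatisfiesSLRel q A B C D :=
    IsPiPlus.satisfiesSLRel ⟨hA, hB, hC, hD0, hD⟩ hq0 hq1
  exact ⟨h.r1, h.r2, h.r3, h.r4, h.r5, h.r6, h.r7, h.exists_algHom⟩
end
end

section
/- With respect to the standard inner product ⟨e_i, e_j⟩ = δ_{ij} on V, the operators π₊(t_{ij}) satisfy the formal adjoint relations of a *-representation of ℂ[w₀SU₁,₁]_q: for all u, v ∈ V one has ⟨π₊(t₁₁)u, v⟩ = ⟨u, −π₊(t₂₂)v⟩ and ⟨π₊(t₁₂)u, v⟩ = ⟨u, −q π₊(t₂₁)v⟩. (These correspond to the involution t₁₁* = −t₂₂, t₁₂* = −q t₂₁.) -/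
/-!
Both sides of each identity are sesquilinear in `(u, v)`, so it suffices to compare them on pairs
of basis vectors `(e_j, e_k)`. There the first identity says that the real weight
`√(q^{-2(j+1)} - 1)` of `e_j ↦ e_{j+1}` under `π₊(t₁₁)` is that of `e_{j+1} ↦ e_j` under
`-π₊(t₂₂)`, and the second reduces to `q · q^{-(j+1)} = q^{-j}`.
-/

noncomputable section

def innV (u v : ℕ →₀ ℂ) : ℂ := u.sum fun j a => a * (starRingEnd ℂ) (v j)

lemma innV_add_left (u u' v : ℕ →₀ ℂ) : innV (u + u') v = innV u v + innV u' v :=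
  Finsupp.sum_add_index' (by simp) (fun _ _ _ => add_mul _ _ _)

lemma innV_smul_left (c : ℂ) (u v : ℕ →₀ ℂ) : innV (c • u) v = c * innV u v := by
  rw [innV, innV, Finsupp.sum_smul_index (by simp), Finsupp.mul_sum]
  simp only [mul_assoc]

lemma innV_add_right (u v v' : ℕ →₀ ℂ) : innV u (v + v') = innV u v + innV u v' := by
  simp only [innV, ← Finsupp.sum_add, Finsupp.add_apply, map_add, mul_add]

lemma innV_smul_right (c : ℂ) (u v : ℕ →₀ ℂ) :
    innV u (c • v) = starRingEnd ℂ c * innV u v := by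
  simp only [innV, Finsupp.mul_sum, Finsupp.smul_apply, smul_eq_mul, map_mul]
  exact Finsupp.sum_congr fun _ _ => by ring

lemma innV_zero_right (u : ℕ →₀ ℂ) : innV u 0 = 0 := by
  simp [innV]

def innVₛₗ : (ℕ →₀ ℂ) →ₗ[ℂ] (ℕ →₀ ℂ) →ₗ⋆[ℂ] ℂ :=
  LinearMap.mk₂'ₛₗ _ _ innV innV_add_left innV_smul_left innV_add_right innV_smul_right

lemma innV_eV_eV (j k : ℕ) : innV (eV j) (eV k) = if j = k then 1 else 0 := by
  simp [eV, innV, Finsupp.single_apply, eq_comm]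

lemma innV_eq_of_forall_eV {T S : Module.End ℂ (ℕ →₀ ℂ)}
    (h : ∀ j k, innV (T (eV j)) (eV k) = innV (eV j) (S (eV k))) (u v : ℕ →₀ ℂ) :
    innV (T u) v = innV u (S v) :=
  LinearMap.congr_fun₂ (LinearMap.ext_basis (B := innVₛₗ.comp T) (B' := innVₛₗ.compl₂ S)
    Finsupp.basisSingleOne Finsupp.basisSingleOne h) u v

theorem piPlus_star_representation_general (q : ℝ) (hq0 : 0 < q)
    (A B C D : Module.End ℂ (ℕ →₀ ℂ))
    (hA : ∀ j : ℕ, A (eV j) = (Real.sqrt ((q ^ (2 * (j + 1)))⁻¹ - 1) : ℂ) • eV (j + 1))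
    (hB : ∀ j : ℕ, B (eV j) = (((q : ℂ) ^ j)⁻¹) • eV j)
    (hC : ∀ j : ℕ, C (eV j) = (-((q : ℂ) ^ (j + 1))⁻¹) • eV j)
    (hD0 : D (eV 0) = 0)
    (hD : ∀ j : ℕ, D (eV (j + 1)) = (-(Real.sqrt ((q ^ (2 * (j + 1)))⁻¹ - 1) : ℂ)) • eV j) :
    (∀ u v : ℕ →₀ ℂ, innV (A u) v = innV u (-(D v))) ∧
    (∀ u v : ℕ →₀ ℂ, innV (B u) v = innV u ((-(q : ℂ)) • C v)) := by
  refine ⟨innV_eq_of_forall_eV (S := -D) fun j k => ?_,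
    innV_eq_of_forall_eV (S := (-(q : ℂ)) • C) fun j k => ?_⟩
  · rcases k with _ | k
    · rw [hA, LinearMap.neg_apply, hD0, neg_zero, innV_smul_left, innV_eV_eV, innV_zero_right]
      simp
    · simp only [LinearMap.neg_apply, hA, hD, innV_smul_left, neg_smul, neg_neg, innV_smul_right,
        innV_eV_eV, Complex.conj_ofReal, add_left_inj]
      split_ifs with hjk <;> simp only [hjk, mul_zero]
  · simp only [LinearMap.smul_apply, hB, hC, smul_smul, innV_smul_left, innV_smul_right,
      innV_eV_eV]
    rcases eq_or_ne j k with rfl | hjk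
    · have hcoeff : -(q : ℂ) * -((q : ℂ) ^ (j + 1))⁻¹ = ((q : ℂ) ^ j)⁻¹ := by
        rw [neg_mul_neg, pow_succ', mul_inv, mul_inv_cancel_left₀ (by exact_mod_cast hq0.ne')]
      rw [if_pos rfl, hcoeff, map_inv₀, map_pow, Complex.conj_ofReal]
    · simp only [if_neg hjk, mul_zero]

/-- The operators `π₊(t₁₁)`, `π₊(t₂₂)` and `π₊(t₁₂)`, `π₊(t₂₁)` are formal adjoints
of one another up to the signs and factors prescribed by the involution
`t₁₁* = −t₂₂`, `t₁₂* = −q t₂₁` of `ℂ[w₀SU₁,₁]_q`. -/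
theorem piPlus_star_representation (q : ℝ) (hq0 : 0 < q) (hq1 : q < 1)
    (A B C D : Module.End ℂ (ℕ →₀ ℂ))
    (hA : ∀ j : ℕ, A (eV j) = (Real.sqrt ((q ^ (2 * (j + 1)))⁻¹ - 1) : ℂ) • eV (j + 1))
    (hB : ∀ j : ℕ, B (eV j) = (((q : ℂ) ^ j)⁻¹) • eV j)
    (hC : ∀ j : ℕ, C (eV j) = (-((q : ℂ) ^ (j + 1))⁻¹) • eV j)
    (hD0 : D (eV 0) = 0)
    (hD : ∀ j : ℕ, D (eV (j + 1)) = (-(Real.sqrt ((q ^ (2 * (j + 1)))⁻¹ - 1) : ℂ)) • eV j) :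
    (∀ u v : ℕ →₀ ℂ, innV (A u) v = innV u (-(D v))) ∧
    (∀ u v : ℕ →₀ ℂ, innV (B u) v = innV u ((-(q : ℂ)) • C v)) :=
  piPlus_star_representation_general q hq0 A B C D hA hB hC hD0 hD
end
end
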